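/- arXiv:1601.04840 — 13 statements merged into one kernel-verified Lean document; each statement's English description precedes it below -/
import Mathlib

section
/- The Prouhet–Thue–Morse generating series F(X) = Σ_{n≥0} t_n X^n over F_2 satisfies the algebraic equation (1+X)^3 F(X)^2 + (1+X^2) F(X) + X = 0. -/
/-!
Over `𝔽₂` squaring is the Frobenius, so `F(X)² = F(X²)`. Splitting `F` into even and odd parts,
the recurrences give `F = (1 + X) F(X²) + X / (1 - X²)`; multiplying by `1 + X² = (1 + X)²` and
substituting `F(X²) = F²` yields the quadratic equation.
-/

open PowerSeries

namespace PowerSeries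

variable {R : Type*} [CommRing R]

theorem map_frobenius_expand (p : ℕ) [ExpChar R p] (hp : p ≠ 0) (f : R⟦X⟧) :
    map (frobenius R p) (expand p hp f) = f ^ p :=
  MvPowerSeries.map_frobenius_expand p hp

theorem expand_even_add_X_mul_expand_odd (f : R⟦X⟧) :
    expand 2 two_ne_zero (mk fun n ↦ coeff (2 * n) f) +
      X * expand 2 two_ne_zero (mk fun n ↦ coeff (2 * n + 1) f) = f := by
  ext n
  obtain ⟨k, rfl | rfl⟩ := Nat.even_or_odd' n
  · rcases k with _ | k
    · simp
    · rw [map_add, coeff_expand_mul, coeff_mk, show 2 * (k + 1) = 2 * k + 1 + 1 by ring,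
        coeff_succ_X_mul, coeff_expand_of_not_dvd _ _ _ (by omega), add_zero]
  · simp [coeff_succ_X_mul, coeff_expand]

end PowerSeries

theorem thueMorse_functional_eq {R : Type*} [CommRing R] (t : ℕ → R)
    (he : ∀ n, t (2 * n) = t n) (ho : ∀ n, t (2 * n + 1) = 1 + t n) :
    mk t = (1 + X) * expand 2 two_ne_zero (mk t) + X * expand 2 two_ne_zero (mk 1) := by
  have hodd : (mk fun n ↦ t (2 * n + 1)) = mk 1 + mk t := by ext; simp [ho]
  conv_lhs => rw [← expand_even_add_X_mul_expand_odd (mk t)]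
  simp only [coeff_mk, he, hodd, map_add]
  ring

theorem ptm_series_algebraic_general (t : ℕ → ZMod 2)
    (he : ∀ n, t (2 * n) = t n) (ho : ∀ n, t (2 * n + 1) = 1 + t n) :
    (1 + X) ^ 3 * (PowerSeries.mk t) ^ 2 + (1 + X ^ 2) * PowerSeries.mk t + X = 0 := by
  set G := expand 2 two_ne_zero (mk t)
  set U : (ZMod 2)⟦X⟧ := expand 2 two_ne_zero (mk 1)
  have hsq : mk t ^ 2 = G := by
    rw [← map_frobenius_expand, ZMod.frobenius_zmod, map_id, id]
  have hU : (1 - X ^ 2) * U = 1 := by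
    simpa [mul_comm] using congrArg (expand 2 two_ne_zero) (mk_one_mul_one_sub_eq_one (ZMod 2))
  have two : (2 : (ZMod 2)⟦X⟧) = 0 := by
    rw [← map_ofNat C 2, show (2 : ZMod 2) = 0 from rfl, map_zero]
  -- what is left over is twice a power series
  linear_combination (1 + X) ^ 3 * hsq + (1 + X ^ 2) * thueMorse_functional_eq t he ho + X * hU
    + ((1 + X) * (1 + X + X ^ 2) * G + X + X ^ 3 * U) * two

theorem ptm_series_algebraic (t : ℕ → ZMod 2) (h0 : t 0 = 0)
    (he : ∀ n, t (2 * n) = t n) (ho : ∀ n, t (2 * n + 1) = 1 + t n) :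
    (1 + X) ^ 3 * (PowerSeries.mk t) ^ 2 + (1 + X ^ 2) * PowerSeries.mk t + X = 0 :=
  ptm_series_algebraic_general t he ho
end

section
/- The compositional inverse G(X) of the Prouhet–Thue–Morse series F(X) over F_2 satisfies X^2 G(X)^3 + X(1+X) G(X)^2 + (X^2+1) G(X) + X(X+1) = 0. -/
/-!
Splitting `F = ∑ tₙ Xⁿ` into even and odd parts, the recursion for `tₙ` gives
`F = F(X²) + X (F(X²) + 1/(1 - X²))`, and over `𝔽₂` one has `F(X²) = F²`. Clearing the
denominator yields `(1 + X + X² + X³) F² + (1 + X²) F + X = 0`; substituting `X ↦ G` is a ring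
homomorphism sending `F` to `F ∘ G = X`, and this turns the equation into the cubic one for `G`.
-/

open PowerSeries Finset

namespace PowerSeries

variable {R : Type*} [CommRing R]

theorem coeff_pow_eq_zero_of_lt {g : R⟦X⟧} (hg : constantCoeff g = 0) {k n : ℕ}
    (hkn : k < n) : coeff k (g ^ n) = 0 :=
  coeff_of_lt_order _
    ((Nat.cast_lt.mpr hkn).trans_le (le_order_pow_of_constantCoeff_eq_zero n hg))

theorem coeff_subst_eq_coeff_sum_range {g : R⟦X⟧} (hg : constantCoeff g = 0) (f : R⟦X⟧)
    (k : ℕ) : coeff k (f.subst g) = coeff k (∑ n ∈ range (k + 1), C (coeff n f) * g ^ n) := by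
  rw [coeff_subst' (HasSubst.of_constantCoeff_zero' hg),
    finsum_eq_sum_of_support_subset (s := range (k + 1))]
  · simp [coeff_C_mul]
  · intro n hn
    by_contra h
    simp only [coe_range, Set.mem_Iio, not_lt] at h
    exact hn (by simp [coeff_pow_eq_zero_of_lt hg (Nat.lt_of_succ_le h)])

theorem mk_eq_expand_two_add_X_mul_expand_two (a : ℕ → R) :
    mk a = expand 2 two_ne_zero (mk fun n => a (2 * n))
      + X * expand 2 two_ne_zero (mk fun n => a (2 * n + 1)) := by
  ext k
  rcases Nat.even_or_odd' k with ⟨r, rfl | rfl⟩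
  · rcases r with _ | r
    · simp
    · rw [show 2 * (r + 1) = 2 * r + 1 + 1 by ring]
      simp only [coeff_mk, map_add, coeff_expand, Nat.dvd_add_self_right, dvd_mul_right,
        ↓reduceIte, show (2 * r + 1 + 1) / 2 = r + 1 by omega, coeff_succ_X_mul,
        Nat.not_two_dvd_bit1, add_zero]
      rfl
  · simp [coeff_succ_X_mul, coeff_expand]

theorem zmod_expand_eq_pow {p : ℕ} [Fact p.Prime] (f : (ZMod p)⟦X⟧) :
    expand p (Fact.out : p.Prime).ne_zero f = f ^ p := by
  ext n
  rw [coeff_expand, ← coeff_coe_trunc_of_lt n.lt_succ_self, ← trunc_trunc_pow,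
    coeff_coe_trunc_of_lt n.lt_succ_self, ← Polynomial.coe_pow, Polynomial.coeff_coe,
    ← ZMod.expand_card, Polynomial.coeff_expand (Fact.out : p.Prime).pos]
  split_ifs
  · rw [coeff_trunc, if_pos (Nat.lt_succ_of_le (Nat.div_le_self n p))]
  · rfl

theorem mk_ptm_eq_expand {t : ℕ → R} (he : ∀ n, t (2 * n) = t n)
    (ho : ∀ n, t (2 * n + 1) = 1 + t n) :
    mk t = expand 2 two_ne_zero (mk t) + X * expand 2 two_ne_zero (mk 1 + mk t) := by
  conv_lhs => rw [mk_eq_expand_two_add_X_mul_expand_two t]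
  simp only [he, ho]
  rfl

theorem mk_ptm_quadratic_equation {t : ℕ → ZMod 2} (he : ∀ n, t (2 * n) = t n)
    (ho : ∀ n, t (2 * n + 1) = 1 + t n) :
    mk t ^ 2 * (1 + X + X ^ 2 + X ^ 3) + mk t * (1 + X ^ 2) + X = 0 := by
  have hrec := mk_ptm_eq_expand he ho
  rw [map_add, zmod_expand_eq_pow (mk t)] at hrec
  have hgeom := congrArg (expand 2 two_ne_zero) (mk_one_mul_one_sub_eq_one (ZMod 2))
  rw [map_mul, map_sub, map_one, expand_X] at hgeom
  have h2 : (2 : (ZMod 2)⟦X⟧) = 0 := by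
    rw [← map_ofNat C 2, show (2 : ZMod 2) = 0 by decide, map_zero]
  linear_combination (1 + X ^ 2) * hrec + X * hgeom
    + (mk t ^ 2 * (1 + X + X ^ 2 + X ^ 3) + X + X ^ 3 * expand 2 two_ne_zero (mk 1)) * h2

end PowerSeries

theorem inverse_ptm_cubic_equation_general (t : ℕ → ZMod 2)
    (he : ∀ n, t (2 * n) = t n) (ho : ∀ n, t (2 * n + 1) = 1 + t n)
    (G : PowerSeries (ZMod 2)) (hG0 : constantCoeff G = 0)
    (hFG : ∀ k : ℕ, coeff k
      (∑ n ∈ Finset.range (k + 1), PowerSeries.C (t n) * G ^ n) =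
      coeff k X) :
    X ^ 2 * G ^ 3 + X * (1 + X) * G ^ 2 + (X ^ 2 + 1) * G + X * (X + 1) = 0 := by
  have hF : (mk t).subst G = X := by
    ext k
    rw [coeff_subst_eq_coeff_sum_range hG0, ← hFG k]
    simp only [coeff_mk]
  have key := congrArg (substAlgHom (HasSubst.of_constantCoeff_zero' hG0))
    (mk_ptm_quadratic_equation he ho)
  simp only [map_add, map_mul, map_pow, map_one, map_zero, substAlgHom_X, coe_substAlgHom,
    hF] at key
  linear_combination key

/-- The compositional inverse `G` of the Prouhet–Thue–Morse series
`F(X) = ∑ tₙ Xⁿ` over `𝔽₂` satisfies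
`X²G³ + X(1+X)G² + (X²+1)G + X(X+1) = 0`.
Composition with a series having zero constant coefficient is expressed
coefficient-wise: the `k`-th coefficient of `F ∘ G` equals the `k`-th coefficient
of `∑_{n ≤ k} tₙ Gⁿ` since `Gⁿ` has order at least `n`. -/
theorem inverse_ptm_cubic_equation (t : ℕ → ZMod 2) (h0 : t 0 = 0)
    (he : ∀ n, t (2 * n) = t n) (ho : ∀ n, t (2 * n + 1) = 1 + t n)
    (G : PowerSeries (ZMod 2)) (hG0 : constantCoeff G = 0)
    (hFG : ∀ k : ℕ, coeff k
      (∑ n ∈ Finset.range (k + 1), PowerSeries.C (t n) * G ^ n) =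
      coeff k X)
    (hGF : ∀ k : ℕ, coeff k
      (∑ n ∈ Finset.range (k + 1),
        PowerSeries.C (coeff n G) * (PowerSeries.mk t) ^ n) =
      coeff k X) :
    X ^ 2 * G ^ 3 + X * (1 + X) * G ^ 2 + (X ^ 2 + 1) * G + X * (X + 1) = 0 :=
  inverse_ptm_cubic_equation_general t he ho G hG0 hFG
end

section
/- The inverse Prouhet–Thue–Morse sequence c satisfies c_{8n-1} = c_{8n} = c_{8n+1} = c_{8n+2} = c_{2n-1} for n ≥ 1, and c_{8n+3} = c_{8n+4} = c_{8n+5} = c_{8n+6} = 0 for n ≥ 0. -/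
/-- The inverse Prouhet–Thue–Morse sequence satisfies
`c_{8n-1} = c_{8n} = c_{8n+1} = c_{8n+2} = c_{2n-1}` for `n ≥ 1` and
`c_{8n+3} = c_{8n+4} = c_{8n+5} = c_{8n+6} = 0` for `n ≥ 0`. -/
theorem iptm_eight_recurrence (c : ℕ → ZMod 2) (hc0 : c 0 = 0) (hc1 : c 1 = 1) (hc2 : c 2 = 1) (hc3 : c 3 = 0)
    (h40 : ∀ n : ℕ, 1 ≤ n → c (4 * n) = c (4 * n - 1))
    (h41 : ∀ n : ℕ, 1 ≤ n → c (4 * n + 1) = c (4 * n - 1))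
    (h42 : ∀ n : ℕ, 1 ≤ n → c (4 * n + 2) = c (4 * n - 1))
    (h43 : ∀ n : ℕ, 1 ≤ n → c (4 * n + 3) = c (4 * n - 1) + c n) :
    (∀ n : ℕ, 1 ≤ n →
      c (8 * n - 1) = c (2 * n - 1) ∧ c (8 * n) = c (2 * n - 1) ∧
      c (8 * n + 1) = c (2 * n - 1) ∧ c (8 * n + 2) = c (2 * n - 1)) ∧
    (∀ n : ℕ, c (8 * n + 3) = 0 ∧ c (8 * n + 4) = 0 ∧
      c (8 * n + 5) = 0 ∧ c (8 * n + 6) = 0) := by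
  -- Key lemma: c (2n) = c (2n-1) for n ≥ 1
  have L : ∀ n : ℕ, 1 ≤ n → c (2 * n) = c (2 * n - 1) := by
    intro n hn
    rcases Nat.even_or_odd n with ⟨m, hm⟩ | ⟨m, hm⟩
    · have hm1 : 1 ≤ m := by omega
      have h := h40 m hm1
      have e1 : 2 * n = 4 * m := by omega
      have e2 : 2 * n - 1 = 4 * m - 1 := by omega
      rw [e2, e1]; exact h
    · rcases Nat.eq_zero_or_pos m with hm0 | hm1
      · have e1 : 2 * n = 2 := by omega
        have e2 : 2 * n - 1 = 1 := by omega
        rw [e2, e1, hc2, hc1]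
      · have h1 := h42 m hm1
        have h2 := h41 m hm1
        have e1 : 2 * n = 4 * m + 2 := by omega
        have e2 : 2 * n - 1 = 4 * m + 1 := by omega
        rw [e2, e1, h1, h2]
  -- Mutual induction: c (8n+3) = 0 and (n ≥ 1 → c (8n-1) = c (2n-1))
  have key : ∀ n : ℕ, c (8 * n + 3) = 0 ∧ (1 ≤ n → c (8 * n - 1) = c (2 * n - 1)) := by
    intro n
    induction n with
    | zero => exact ⟨by simpa using hc3, by omega⟩
    | succ k ih =>
      have hE : c (8 * (k + 1) - 1) = c (2 * (k + 1) - 1) := by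
        have h := h43 (2 * k + 1) (by omega)
        have e1 : 4 * (2 * k + 1) + 3 = 8 * (k + 1) - 1 := by omega
        have e2 : 4 * (2 * k + 1) - 1 = 8 * k + 3 := by omega
        have e3 : 2 * k + 1 = 2 * (k + 1) - 1 := by omega
        rw [e1, e2, ih.1] at h
        rw [h, ← e3, zero_add]
      have hZ : c (8 * (k + 1) + 3) = 0 := by
        have h := h43 (2 * (k + 1)) (by omega)
        have e1 : 4 * (2 * (k + 1)) + 3 = 8 * (k + 1) + 3 := by omega
        have e2 : 4 * (2 * (k + 1)) - 1 = 8 * (k + 1) - 1 := by omega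
        rw [e1, e2, hE, L (k + 1) (by omega)] at h
        rw [h]
        exact CharTwo.add_self_eq_zero _
      exact ⟨hZ, fun _ => hE⟩
  constructor
  · intro n hn
    have hE := (key n).2 hn
    have h0 := h40 (2 * n) (by omega)
    have h1 := h41 (2 * n) (by omega)
    have h2 := h42 (2 * n) (by omega)
    have e1 : 4 * (2 * n) = 8 * n := by omega
    have e2 : 4 * (2 * n) - 1 = 8 * n - 1 := by omega
    rw [e2, e1] at h0 h1 h2
    exact ⟨hE, h0.trans hE, h1.trans hE, h2.trans hE⟩
  · intro n
    have hZ := (key n).1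
    have h0 := h40 (2 * n + 1) (by omega)
    have h1 := h41 (2 * n + 1) (by omega)
    have h2 := h42 (2 * n + 1) (by omega)
    have e1 : 4 * (2 * n + 1) = 8 * n + 4 := by omega
    have e2 : 4 * (2 * n + 1) - 1 = 8 * n + 3 := by omega
    have e3 : 4 * (2 * n + 1) + 1 = 8 * n + 5 := by omega
    have e4 : 4 * (2 * n + 1) + 2 = 8 * n + 6 := by omega
    rw [e2, e1] at h0
    rw [e3, e2] at h1
    rw [e4, e2] at h2
    exact ⟨hZ, h0.trans hZ, h1.trans hZ, h2.trans hZ⟩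
end

section
/- For n ≥ 1, c_n = 1 if and only if the base-4 expansion of n+1 consists only of digits 0 and 2, except possibly for the least significant digit which may be arbitrary. -/
namespace IPTMaux

/-- All base-4 digits of `m` are 0 or 2. -/
def Q (m : ℕ) : Prop := ∀ i : ℕ, m / 4 ^ i % 4 = 0 ∨ m / 4 ^ i % 4 = 2

/-- All base-4 digits of `m` except possibly the least are 0 or 2. -/
def P (m : ℕ) : Prop := ∀ i : ℕ, 1 ≤ i → m / 4 ^ i % 4 = 0 ∨ m / 4 ^ i % 4 = 2

lemma divpow (m i : ℕ) (hi : 1 ≤ i) : m / 4 ^ i = m / 4 / 4 ^ (i - 1) := by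
  rw [Nat.div_div_eq_div_mul]
  congr 1
  rw [← pow_succ']
  congr 1
  omega

lemma P_iff_Q_div (m : ℕ) : P m ↔ Q (m / 4) := by
  constructor
  · intro h i
    have := h (i + 1) (by omega)
    rwa [divpow m (i + 1) (by omega), Nat.add_sub_cancel] at this
  · intro h i hi
    rw [divpow m i hi]
    exact h (i - 1)

lemma Q_iff (m : ℕ) : Q m ↔ (m % 4 = 0 ∨ m % 4 = 2) ∧ Q (m / 4) := by
  constructor
  · intro h
    refine ⟨by simpa using h 0, fun i => ?_⟩
    have := h (i + 1)
    rwa [divpow m (i + 1) (by omega), Nat.add_sub_cancel] at this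
  · rintro ⟨h0, h⟩ i
    cases i with
    | zero => simpa using h0
    | succ j => rw [divpow m (j + 1) (by omega), Nat.add_sub_cancel]; exact h j

lemma QimpP (q : ℕ) : Q q → P (q + 1) := by
  intro hq
  rw [P_iff_Q_div]
  have h0 : q % 4 = 0 ∨ q % 4 = 2 := by simpa using hq 0
  have hdiv : (q + 1) / 4 = q / 4 := by omega
  rw [hdiv]
  exact ((Q_iff q).1 hq).2

lemma key (q : ℕ) : Q (q + 1) ↔ (¬ Q q ∧ P (q + 1)) := by
  constructor
  · intro h
    refine ⟨?_, (P_iff_Q_div _).2 ((Q_iff _).1 h).2⟩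
    intro hq
    have h0 : (q + 1) % 4 = 0 ∨ (q + 1) % 4 = 2 := by simpa using h 0
    have h0' : q % 4 = 0 ∨ q % 4 = 2 := by simpa using hq 0
    omega
  · rintro ⟨hq, hp⟩
    rw [Q_iff]
    by_cases hd : (q + 1) % 4 = 0 ∨ (q + 1) % 4 = 2
    · exact ⟨hd, (P_iff_Q_div _).1 hp⟩
    · exfalso; apply hq
      rw [Q_iff]
      have hdiv : (q + 1) / 4 = q / 4 := by omega
      refine ⟨by omega, ?_⟩
      rw [← hdiv]; exact (P_iff_Q_div _).1 hp

lemma zmod_add : ∀ a b : ZMod 2, a + b = 1 ↔ ((a = 1) ↔ ¬(b = 1)) := by decide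

lemma iff_not_iff (A B : Prop) (h : A → B) : (A ↔ ¬B) ↔ (¬A ∧ B) := by tauto

end IPTMaux

/-- For `n ≥ 1`, `cₙ = 1` iff the base-4 expansion of `n+1` consists only of
digits `0` and `2`, except possibly for the least significant digit. -/
theorem iptm_one_iff_base_four (c : ℕ → ZMod 2) (hc0 : c 0 = 0) (hc1 : c 1 = 1) (hc2 : c 2 = 1) (hc3 : c 3 = 0)
    (h40 : ∀ n : ℕ, 1 ≤ n → c (4 * n) = c (4 * n - 1))
    (h41 : ∀ n : ℕ, 1 ≤ n → c (4 * n + 1) = c (4 * n - 1))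
    (h42 : ∀ n : ℕ, 1 ≤ n → c (4 * n + 2) = c (4 * n - 1))
    (h43 : ∀ n : ℕ, 1 ≤ n → c (4 * n + 3) = c (4 * n - 1) + c n) :
    ∀ n : ℕ, 1 ≤ n →
      (c n = 1 ↔ ∀ i : ℕ, 1 ≤ i → (n + 1) / 4 ^ i % 4 = 0 ∨ (n + 1) / 4 ^ i % 4 = 2) := by
  open IPTMaux in
  have main : ∀ n : ℕ, (1 ≤ n → (c n = 1 ↔ P (n + 1))) ∧
      (1 ≤ n → (c (4 * n - 1) = 1 ↔ Q n)) := by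
    intro n
    induction n using Nat.strong_induction_on with
    | _ n ih =>
      constructor
      · -- first part : c n = 1 ↔ P (n+1)
        intro hn
        by_cases hsmall : n ≤ 3
        · interval_cases n
          · rw [hc1]
            simp only [true_iff]
            intro i hi
            left
            have h4 : 2 < 4 ^ i := by
              calc 2 < 4 ^ 1 := by norm_num
              _ ≤ 4 ^ i := Nat.pow_le_pow_right (by norm_num) hi
            simp [Nat.div_eq_of_lt h4]
          · rw [hc2]
            simp only [true_iff]
            intro i hi
            left
            have h4 : 3 < 4 ^ i := by
              calc 3 < 4 ^ 1 := by norm_num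
              _ ≤ 4 ^ i := Nat.pow_le_pow_right (by norm_num) hi
            simp [Nat.div_eq_of_lt h4]
          · rw [hc3]
            constructor
            · intro h; exact absurd h (by decide)
            · intro h
              have := h 1 le_rfl
              norm_num at this
        · push_neg at hsmall
          have hq : 1 ≤ n / 4 := by omega
          have hqlt : n / 4 < n := by omega
          set q := n / 4 with hqdef
          have hB := (ih q hqlt).2 hq
          have hA := (ih q hqlt).1 hq
          have hmod : n % 4 = 0 ∨ n % 4 = 1 ∨ n % 4 = 2 ∨ n % 4 = 3 := by omega
          rcases hmod with h | h | h | h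
          · have hne : n = 4 * q := by omega
            rw [hne, h40 q hq, hB, P_iff_Q_div, show (4 * q + 1) / 4 = q from by omega]
          · have hne : n = 4 * q + 1 := by omega
            rw [hne, h41 q hq, hB, P_iff_Q_div, show (4 * q + 1 + 1) / 4 = q from by omega]
          · have hne : n = 4 * q + 2 := by omega
            rw [hne, h42 q hq, hB, P_iff_Q_div, show (4 * q + 2 + 1) / 4 = q from by omega]
          · have hne : n = 4 * q + 3 := by omega
            rw [hne, h43 q hq, zmod_add, hB, hA]
            have hP : P (4 * q + 3 + 1) ↔ Q (q + 1) := by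
              rw [P_iff_Q_div, show (4 * q + 3 + 1) / 4 = q + 1 from by omega]
            rw [hP, key]
            exact iff_not_iff _ _ (QimpP q)
      · -- second part : c (4n-1) = 1 ↔ Q n
        intro hn
        by_cases h1 : n = 1
        · subst h1
          norm_num
          rw [hc3]
          constructor
          · intro h; exact absurd h (by decide)
          · intro h
            have := h 0
            norm_num at this
        · have hn2 : 2 ≤ n := by omega
          have hm : 4 * n - 1 = 4 * (n - 1) + 3 := by omega
          have hn1 : 1 ≤ n - 1 := by omega
          have hlt : n - 1 < n := by omega
          rw [hm, h43 (n - 1) hn1, zmod_add, (ih (n - 1) hlt).2 hn1,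
            (ih (n - 1) hlt).1 hn1]
          have hk := key (n - 1)
          have hi := QimpP (n - 1)
          rw [show n - 1 + 1 = n from by omega] at hk hi ⊢
          rw [hk]
          exact iff_not_iff _ _ hi
  intro n hn
  exact (main n).1 hn
end

section
/- For n ≥ 1, c_n = 1 if and only if for every k ≥ 1 the binary digit of n+1 at position 2k (i.e., the coefficient of 2^{2k}) is 0. -/
private def Qd (m : ℕ) : Prop := ∀ j : ℕ, m / 2 ^ (2 * j) % 2 = 0

private lemma Qd_zero : Qd 0 := fun j => by simp

private lemma div_step (m j : ℕ) : m / 2 ^ (2 * (j + 1)) = (m / 4) / 2 ^ (2 * j) := by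
  rw [Nat.div_div_eq_div_mul]
  congr 1
  rw [show 2 * (j + 1) = 2 + 2 * j by ring, pow_add]
  norm_num

private lemma Qd_iff (m : ℕ) : Qd m ↔ m % 2 = 0 ∧ Qd (m / 4) := by
  constructor
  · intro h
    refine ⟨by simpa using h 0, fun j => ?_⟩
    have := h (j + 1)
    rwa [div_step] at this
  · rintro ⟨h0, h⟩ j
    cases j with
    | zero => simpa using h0
    | succ j => rw [div_step]; exact h j

private lemma zmod2_cases (a : ZMod 2) : a = 0 ∨ a = 1 := by
  revert a; decide

private lemma rhs_iff (n : ℕ) :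
    (∀ k : ℕ, 1 ≤ k → (n + 1) / 2 ^ (2 * k) % 2 = 0) ↔ Qd ((n + 1) / 4) := by
  constructor
  · intro h j
    rw [← div_step]
    exact h (j + 1) (by omega)
  · intro h k hk
    obtain ⟨j, rfl⟩ : ∃ j, k = j + 1 := ⟨k - 1, by omega⟩
    rw [div_step]
    exact h j

private lemma main_aux (c : ℕ → ZMod 2) (hc1 : c 1 = 1) (hc2 : c 2 = 1) (hc3 : c 3 = 0)
    (h40 : ∀ n : ℕ, 1 ≤ n → c (4 * n) = c (4 * n - 1))
    (h41 : ∀ n : ℕ, 1 ≤ n → c (4 * n + 1) = c (4 * n - 1))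
    (h42 : ∀ n : ℕ, 1 ≤ n → c (4 * n + 2) = c (4 * n - 1))
    (h43 : ∀ n : ℕ, 1 ≤ n → c (4 * n + 3) = c (4 * n - 1) + c n) :
    ∀ n : ℕ, 1 ≤ n → (c n = 1 ↔ Qd ((n + 1) / 4)) := by
  intro n
  induction n using Nat.strong_induction_on with
  | _ n ih =>
  intro hn
  rcases Nat.lt_or_ge n 4 with h4 | h4
  · interval_cases n
    · exact iff_of_true hc1 (by norm_num; exact Qd_zero)
    · exact iff_of_true hc2 (by norm_num; exact Qd_zero)
    · refine iff_of_false (fun h => ?_) (fun h => ?_)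
      · rw [hc3] at h; exact absurd h (by decide)
      · have := (Qd_iff ((3 + 1) / 4)).1 h
        omega
  · set t := n / 4 with ht
    have htge : 1 ≤ t := by omega
    have hmod : n % 4 = 0 ∨ n % 4 = 1 ∨ n % 4 = 2 ∨ n % 4 = 3 := by omega
    rcases hmod with h | h | h | h
    · have hn4 : n = 4 * t := by omega
      rw [hn4, h40 t htge]
      have i1 := ih (4 * t - 1) (by omega) (by omega)
      rw [i1, show (4 * t - 1 + 1) / 4 = t from by omega,
        show (4 * t + 1) / 4 = t from by omega]
    · have hn4 : n = 4 * t + 1 := by omega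
      rw [hn4, h41 t htge]
      have i1 := ih (4 * t - 1) (by omega) (by omega)
      rw [i1, show (4 * t - 1 + 1) / 4 = t from by omega,
        show (4 * t + 1 + 1) / 4 = t from by omega]
    · have hn4 : n = 4 * t + 2 := by omega
      rw [hn4, h42 t htge]
      have i1 := ih (4 * t - 1) (by omega) (by omega)
      rw [i1, show (4 * t - 1 + 1) / 4 = t from by omega,
        show (4 * t + 2 + 1) / 4 = t from by omega]
    · have hn4 : n = 4 * t + 3 := by omega
      rw [hn4, h43 t htge]
      have i1 := ih (4 * t - 1) (by omega) (by omega)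
      have i2 := ih t (by omega) htge
      rw [show (4 * t - 1 + 1) / 4 = t from by omega] at i1
      rw [show (4 * t + 3 + 1) / 4 = t + 1 from by omega, Qd_iff (t + 1)]
      rcases Nat.eq_zero_or_pos (t % 2) with ht2 | ht2
      · -- t even: both summands equal, sum is 0, RHS false
        have e3 : (t + 1) / 4 = t / 4 := by omega
        have hiff : c (4 * t - 1) = 1 ↔ c t = 1 := by
          rw [i1, i2, e3, Qd_iff t]
          simp [ht2]
        have hct : c (4 * t - 1) = c t := by
          rcases zmod2_cases (c (4 * t - 1)) with h1 | h1 <;>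
            rcases zmod2_cases (c t) with h2 | h2 <;>
            simp [h1, h2] at hiff ⊢
        constructor
        · intro hcon
          rw [hct] at hcon
          rcases zmod2_cases (c t) with h2 | h2 <;> rw [h2] at hcon <;>
            exact absurd hcon (by decide)
        · rintro ⟨h1, -⟩
          omega
      · -- t odd: c (4t-1) = 0
        have ht2' : t % 2 = 1 := by omega
        have hq : ¬ Qd t := fun hq => by
          have := ((Qd_iff t).1 hq).1; omega
        have h0 : c (4 * t - 1) = 0 := by
          rcases zmod2_cases (c (4 * t - 1)) with h1 | h1
          · exact h1
          · exact absurd (i1.1 h1) hq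
        rw [h0, zero_add, i2]
        simp [show (t + 1) % 2 = 0 from by omega]

/-- For `n ≥ 1`, `cₙ = 1` iff every binary digit of `n+1` at an even position
`2k` with `k ≥ 1` is `0`. -/
theorem iptm_one_iff_binary_digits (c : ℕ → ZMod 2) (hc0 : c 0 = 0) (hc1 : c 1 = 1) (hc2 : c 2 = 1) (hc3 : c 3 = 0)
    (h40 : ∀ n : ℕ, 1 ≤ n → c (4 * n) = c (4 * n - 1))
    (h41 : ∀ n : ℕ, 1 ≤ n → c (4 * n + 1) = c (4 * n - 1))
    (h42 : ∀ n : ℕ, 1 ≤ n → c (4 * n + 2) = c (4 * n - 1))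
    (h43 : ∀ n : ℕ, 1 ≤ n → c (4 * n + 3) = c (4 * n - 1) + c n) :
    ∀ n : ℕ, 1 ≤ n →
      (c n = 1 ↔ ∀ k : ℕ, 1 ≤ k → (n + 1) / 2 ^ (2 * k) % 2 = 0) := by
  intro n hn
  rw [rhs_iff]
  exact main_aux c hc1 hc2 hc3 h40 h41 h42 h43 n hn
end

section
/- The complex power series C(X) = Σ_{n≥0} c_n X^n (with c_n ∈ {0,1} ⊂ ℂ) satisfies the functional equation C(X) = X(X+1) + X^3(X^4−1)/((X−1)(X^4+1)) · C(X^4) in the field of Laurent/formal power series over ℂ. -/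
/-!
Write `aₖ = c (4k + 3)`. The defining recursion makes `c` constant on the blocks
`[4k + 3, 4k + 6]`, with value `aₖ`, and gives `aₖ₊₁ ≡ aₖ + cₖ₊₁ (mod 2)`. An induction
on `k` sharpens this to `aₖ = 0` for even `k` and `aₖ = cₖ₊₁` for odd `k`, so that in fact
`aₖ₊₁ + aₖ = cₖ₊₁` holds in `ℕ`. For the tail `T = ∑ cₙ₊₃ Xⁿ` this says
`(1 + X⁴) T = ∑ c_{⌊n/4⌋} Xⁿ = (1 + X + X² + X³) C(X⁴)`; since `C = X + X² + X³ T`,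
multiplying by `X - 1` gives the functional equation.
-/

open PowerSeries

namespace PowerSeries

variable {R : Type*}

theorem sum_range_X_pow_mul_mk_ite_mod [CommSemiring R] {k : ℕ} (hk : 0 < k) (f : ℕ → R) :
    (∑ j ∈ Finset.range k, X ^ j) * mk (fun n => if n % k = 0 then f (n / k) else 0) =
      mk fun n => f (n / k) := by
  ext n
  simp only [Finset.sum_mul, map_sum, coeff_X_pow_mul', coeff_mk]
  rw [Finset.sum_eq_single (n % k)]
  · have hdvd : (n - n % k) % k = 0 := Nat.sub_mod_eq_zero_of_mod_eq (Nat.mod_mod n k).symm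
    simp [Nat.mod_le, hdvd, ← Nat.div_eq_sub_mod_div]
  · intro j hj hne
    split_ifs with hjn hdvd
    · have hmod : j ≡ n [MOD k] := (Nat.modEq_iff_dvd' hjn).2 (Nat.dvd_of_mod_eq_zero hdvd)
      exact absurd (Nat.mod_eq_of_modEq hmod.symm (Finset.mem_range.1 hj)).symm hne
    all_goals rfl
  · exact fun h => absurd (Finset.mem_range.2 (Nat.mod_lt n hk)) h

theorem coe_eq_add_div_mul_of_sub_mul_eq [Field R] {A P Q D B : R⟦X⟧} (hD : D ≠ 0)
    (h : (A - P) * D = Q * B) : (A : LaurentSeries R) = P + Q / D * B := by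
  have hD' : (D : LaurentSeries R) ≠ 0 :=
    (map_ne_zero_iff _ HahnSeries.ofPowerSeries_injective).2 hD
  rw [div_mul_eq_mul_div, ← sub_eq_iff_eq_add', eq_div_iff hD']
  simpa only [map_mul, map_sub] using congrArg (HahnSeries.ofPowerSeries ℤ R) h

end PowerSeries

section InverseThueMorse

variable {c : ℕ → ℕ}

theorem block_const (h40 : ∀ n : ℕ, 1 ≤ n → c (4 * n) = c (4 * n - 1))
    (h41 : ∀ n : ℕ, 1 ≤ n → c (4 * n + 1) = c (4 * n - 1))
    (h42 : ∀ n : ℕ, 1 ≤ n → c (4 * n + 2) = c (4 * n - 1)) (k : ℕ) {r : ℕ}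
    (hr : r < 4) :
    c (4 * k + 3 + r) = c (4 * k + 3) := by
  have hk : 4 * (k + 1) - 1 = 4 * k + 3 := by omega
  interval_cases r
  · rfl
  · simpa [hk, mul_add] using h40 (k + 1) (by omega)
  · simpa [hk, mul_add, add_assoc] using h41 (k + 1) (by omega)
  · simpa [hk, mul_add, add_assoc] using h42 (k + 1) (by omega)

theorem succ_eq_of_odd (hc1 : c 1 = 1) (hc2 : c 2 = 1)
    (hblock : ∀ k {r}, r < 4 → c (4 * k + 3 + r) = c (4 * k + 3)) {m : ℕ} (hm : Odd m) :
    c (m + 1) = c m := by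
  obtain rfl | hm3 : m = 1 ∨ 3 ≤ m := by rcases hm with ⟨i, rfl⟩; omega
  · rw [hc1, hc2]
  obtain ⟨k, r, hr, rfl⟩ : ∃ k r, r < 4 ∧ m = 4 * k + 3 + r :=
    ⟨(m - 3) / 4, (m - 3) % 4, Nat.mod_lt _ (by norm_num), by omega⟩
  have hr' : r + 1 < 4 := by rcases hm with ⟨i, hi⟩; omega
  rw [add_assoc, hblock k hr', hblock k hr]

theorem four_mul_add_three_eq_ite (hcv : ∀ n, c n = 0 ∨ c n = 1) (hc3 : c 3 = 0)
    (hstep : ∀ k, c (4 * k + 7) = (c (4 * k + 3) + c (k + 1)) % 2)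
    (hodd : ∀ m, Odd m → c (m + 1) = c m) (k : ℕ) :
    c (4 * k + 3) = if Even k then 0 else c (k + 1) := by
  induction k with
  | zero => simp [hc3]
  | succ k ih =>
    rw [show 4 * (k + 1) + 3 = 4 * k + 7 by ring, hstep, ih]
    rcases Nat.even_or_odd k with hk | hk
    · have hk' : ¬Even (k + 1) := by simpa [Nat.even_add_one] using hk
      rw [if_pos hk, if_neg hk', hodd _ (Even.add_one hk)]
      rcases hcv (k + 1) with h | h <;> simp [h]
    · rw [if_neg (Nat.not_even_iff_odd.2 hk), if_pos (Odd.add_one hk)]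
      omega

theorem four_mul_add_seven_add_four_mul_add_three
    (hpar : ∀ k, c (4 * k + 3) = if Even k then 0 else c (k + 1))
    (hodd : ∀ m, Odd m → c (m + 1) = c m) (k : ℕ) :
    c (4 * k + 7) + c (4 * k + 3) = c (k + 1) := by
  rw [show 4 * k + 7 = 4 * (k + 1) + 3 by ring, hpar, hpar]
  rcases Nat.even_or_odd k with hk | hk
  · have hk' : ¬Even (k + 1) := by simpa [Nat.even_add_one] using hk
    rw [if_neg hk', if_pos hk, hodd _ (Even.add_one hk), add_zero]
  · rw [if_pos (Odd.add_one hk), if_neg (Nat.not_even_iff_odd.2 hk), zero_add]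

theorem mk_add_three_mul_one_add_X_pow_four {R : Type*} [CommSemiring R] (hc0 : c 0 = 0)
    (hc3 : c 3 = 0) (hblock : ∀ k {r}, r < 4 → c (4 * k + 3 + r) = c (4 * k + 3))
    (hsum : ∀ k, c (4 * k + 7) + c (4 * k + 3) = c (k + 1)) :
    (mk fun n => (c (n + 3) : R)) * (1 + X ^ 4) = mk fun n => (c (n / 4) : R) := by
  ext n
  rw [mul_add, mul_one, mul_comm, map_add, coeff_X_pow_mul', coeff_mk, coeff_mk, coeff_mk]
  obtain hn | ⟨m, rfl⟩ : n < 4 ∨ ∃ m, n = m + 4 := by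
    rcases lt_or_ge n 4 with hn | hn
    · exact .inl hn
    · exact .inr ⟨n - 4, by omega⟩
  · have hn3 : c (n + 3) = 0 := by simpa [add_comm, hc3] using hblock 0 hn
    rw [if_neg (by omega), Nat.div_eq_of_lt hn, hn3, hc0, add_zero]
  · obtain ⟨k, r, hr, rfl⟩ : ∃ k r, r < 4 ∧ m = 4 * k + r :=
      ⟨m / 4, m % 4, by omega, by omega⟩
    have hcoeff : c (4 * k + r + 4 + 3) + c (4 * k + r + 3) = c (k + 1) := by
      rw [show 4 * k + r + 4 + 3 = 4 * (k + 1) + 3 + r by ring,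
        show 4 * k + r + 3 = 4 * k + 3 + r by ring, hblock _ hr, hblock _ hr]
      exact hsum k
    rw [if_pos (by omega), Nat.add_sub_cancel, show (4 * k + r + 4) / 4 = k + 1 by omega,
      ← hcoeff, Nat.cast_add]

theorem mk_eq_X_add_X_pow_two_add {R : Type*} [Semiring R] (hc0 : c 0 = 0) (hc1 : c 1 = 1)
    (hc2 : c 2 = 1) :
    (mk fun n => (c n : R)) = X + X ^ 2 + X ^ 3 * mk fun n => (c (n + 3) : R) := by
  ext (_ | _ | _ | n) <;> simp [coeff_X_pow_mul', coeff_X_pow, coeff_X, hc0, hc1, hc2]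

end InverseThueMorse

/-- The complex power series `C(X) = ∑ cₙ Xⁿ` satisfies the functional equation
`C(X) = X(X+1) + X³(X⁴−1)/((X−1)(X⁴+1)) · C(X⁴)` in the field of formal Laurent
series over `ℂ`. Here `C(X⁴)` is the power series whose `4n`-th coefficient is
`cₙ` and whose other coefficients vanish. -/
theorem iptm_functional_equation (c : ℕ → ℕ) (hcv : ∀ n, c n = 0 ∨ c n = 1)
    (hc0 : c 0 = 0) (hc1 : c 1 = 1) (hc2 : c 2 = 1) (hc3 : c 3 = 0)
    (h40 : ∀ n : ℕ, 1 ≤ n → c (4 * n) = c (4 * n - 1))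
    (h41 : ∀ n : ℕ, 1 ≤ n → c (4 * n + 1) = c (4 * n - 1))
    (h42 : ∀ n : ℕ, 1 ≤ n → c (4 * n + 2) = c (4 * n - 1))
    (h43 : ∀ n : ℕ, 1 ≤ n → c (4 * n + 3) = (c (4 * n - 1) + c n) % 2) :
    ((PowerSeries.mk fun n => (c n : ℂ)) : LaurentSeries ℂ) =
      (PowerSeries.X : PowerSeries ℂ) * ((PowerSeries.X : PowerSeries ℂ) + 1) +
        ((PowerSeries.X : PowerSeries ℂ) : LaurentSeries ℂ) ^ 3 *
          (((PowerSeries.X : PowerSeries ℂ) : LaurentSeries ℂ) ^ 4 - 1) /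
          ((((PowerSeries.X : PowerSeries ℂ) : LaurentSeries ℂ) - 1) *
            (((PowerSeries.X : PowerSeries ℂ) : LaurentSeries ℂ) ^ 4 + 1)) *
          ((PowerSeries.mk fun n =>
            if n % 4 = 0 then ((c (n / 4) : ℂ)) else 0) : LaurentSeries ℂ) := by
  have hblock := block_const h40 h41 h42
  have hodd : ∀ m, Odd m → c (m + 1) = c m := fun _ => succ_eq_of_odd hc1 hc2 hblock
  have hstep : ∀ k, c (4 * k + 7) = (c (4 * k + 3) + c (k + 1)) % 2 := fun k => by
    simpa [show 4 * (k + 1) - 1 = 4 * k + 3 by omega, mul_add, add_assoc]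
      using h43 (k + 1) (by omega)
  have htail := mk_add_three_mul_one_add_X_pow_four (R := ℂ) hc0 hc3 hblock
    (four_mul_add_seven_add_four_mul_add_three (four_mul_add_three_eq_ite hcv hc3 hstep hodd) hodd)
  have hspread :=
    sum_range_X_pow_mul_mk_ite_mod (R := ℂ) (k := 4) (by norm_num) fun n => (c n : ℂ)
  have hps : ((mk fun n => (c n : ℂ)) - X * (X + 1)) * ((X - 1) * (X ^ 4 + 1)) =
      X ^ 3 * (X ^ 4 - 1) * mk fun n => if n % 4 = 0 then (c (n / 4) : ℂ) else 0 := by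
    rw [mk_eq_X_add_X_pow_two_add hc0 hc1 hc2]
    linear_combination (X ^ 3 * (X - 1)) * (htail.trans hspread.symm) +
      (X ^ 3 * mk fun n => if n % 4 = 0 then (c (n / 4) : ℂ) else 0) *
        geom_sum_mul (X : ℂ⟦X⟧) 4
  have hD : ((X - 1) * (X ^ 4 + 1) : ℂ⟦X⟧) ≠ 0 := fun h => by
    simpa using congrArg constantCoeff h
  simpa only [map_mul, map_sub, map_add, map_pow, map_one]
    using coe_eq_add_div_mul_of_sub_mul_eq hD hps
end

section
/- The power series C(X) = Σ_{n≥0} c_n X^n ∈ ℂ[[X]] satisfies C(−X) = ((X−1)/(X+1)) C(X), i.e., (X+1) C(−X) = (X−1) C(X) as formal power series over ℂ. -/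
/-- The power series `C(X) = ∑ cₙ Xⁿ ∈ ℂ[[X]]` satisfies
`(X+1)·C(−X) = (X−1)·C(X)`, where `C(−X)` is obtained by rescaling `X ↦ −X`. -/
theorem iptm_odd_functional_equation (c : ℕ → ℕ) (hcv : ∀ n, c n = 0 ∨ c n = 1)
    (hc0 : c 0 = 0) (hc1 : c 1 = 1) (hc2 : c 2 = 1) (hc3 : c 3 = 0)
    (h40 : ∀ n : ℕ, 1 ≤ n → c (4 * n) = c (4 * n - 1))
    (h41 : ∀ n : ℕ, 1 ≤ n → c (4 * n + 1) = c (4 * n - 1))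
    (h42 : ∀ n : ℕ, 1 ≤ n → c (4 * n + 2) = c (4 * n - 1))
    (h43 : ∀ n : ℕ, 1 ≤ n → c (4 * n + 3) = (c (4 * n - 1) + c n) % 2) :
    ((PowerSeries.X : PowerSeries ℂ) + 1) *
        PowerSeries.rescale (-1 : ℂ) (PowerSeries.mk fun n => (c n : ℂ)) =
      ((PowerSeries.X : PowerSeries ℂ) - 1) * (PowerSeries.mk fun n => (c n : ℂ)) := by
  have key : ∀ m : ℕ, c (2 * m + 2) = c (2 * m + 1) := by
    intro m
    rcases Nat.even_or_odd m with ⟨k, hk⟩ | ⟨k, hk⟩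
    · subst hk
      rcases Nat.eq_zero_or_pos k with rfl | hk
      · simpa using hc2.trans hc1.symm
      · have e1 : 2 * (k + k) + 2 = 4 * k + 2 := by ring
        have e2 : 2 * (k + k) + 1 = 4 * k + 1 := by ring
        rw [e1, e2, h42 k hk, h41 k hk]
    · subst hk
      have e1 : 2 * (2 * k + 1) + 2 = 4 * (k + 1) := by ring
      have e2 : 2 * (2 * k + 1) + 1 = 4 * (k + 1) - 1 := by omega
      rw [e1, e2, h40 (k + 1) (by omega)]
  rw [add_mul, sub_mul]
  simp only [one_mul]
  ext n
  cases n with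
  | zero =>
    simp [PowerSeries.coeff_zero_eq_constantCoeff, PowerSeries.rescale, hc0]
  | succ n =>
    simp only [map_add, map_sub, PowerSeries.coeff_succ_X_mul,
      PowerSeries.coeff_rescale, PowerSeries.coeff_mk]
    rcases Nat.even_or_odd n with hn | hn
    · rw [hn.neg_one_pow, (Even.add_one hn).neg_one_pow]
      ring
    · obtain ⟨k, hk⟩ := hn
      have hn' : Odd n := ⟨k, hk⟩
      have hcc : (c (n + 1) : ℂ) = (c n : ℂ) := by
        have h1 : n + 1 = 2 * k + 2 := by omega
        have h2 : n = 2 * k + 1 := hk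
        rw [h1, h2, key k]
      rw [hcc, hn'.neg_one_pow, (Odd.add_one hn').neg_one_pow]
      ring
end

section
/- Let a : ℕ → ℤ be defined by a_n = 4 b_{⌈(n+1)/4⌉ } + r where n = 4k + r with r ∈ {−1,0,1,2} (i.e., a_{4k+r} = 4 b_k + r for r = −1,0,1,2), where b_0=0, b_{2n}=4b_n, b_{2n+1}=4b_n+2. Then a satisfies: a_{4n} = a_{4n−1} + 1, a_{4n+1} = a_{4n−1} + 2, a_{4n+2} = a_{4n−1} + 3 for n ≥ 1, a_{8n+3} = a_{8n} + 7, and a_{8n+7} = 4 a_{4n+3} + 3. -/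
/-- With `a_{4k+r} = 4b_k + r` for `r ∈ {−1,0,1,2}` (encoded as
`a n = 4·b((n+1)/4) + ((n+1) % 4) − 1`), the sequence `a` satisfies the
stated recurrences. -/
theorem a_recurrences_from_b (b : ℕ → ℕ) (hb0 : b 0 = 0)
    (hbe : ∀ n, b (2 * n) = 4 * b n) (hbo : ∀ n, b (2 * n + 1) = 4 * b n + 2)
    (a : ℕ → ℤ)
    (ha : ∀ n : ℕ, a n = 4 * (b ((n + 1) / 4) : ℤ) + ((n + 1) % 4 : ℕ) - 1) :
    (∀ n : ℕ, 1 ≤ n →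
      a (4 * n) = a (4 * n - 1) + 1 ∧
      a (4 * n + 1) = a (4 * n - 1) + 2 ∧
      a (4 * n + 2) = a (4 * n - 1) + 3) ∧
    (∀ n : ℕ, a (8 * n + 3) = a (8 * n) + 7) ∧
    (∀ n : ℕ, a (8 * n + 7) = 4 * a (4 * n + 3) + 3) := by
  refine ⟨fun n hn => ?_, fun n => ?_, fun n => ?_⟩
  · have e1 : 4 * n - 1 + 1 = 4 * n := by omega
    rw [ha (4*n-1), ha (4*n), ha (4*n+1), ha (4*n+2), e1]
    have d1 : (4*n) / 4 = n := by omega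
    have d2 : (4*n+1) / 4 = n := by omega
    have d3 : (4*n+1+1) / 4 = n := by omega
    have d4 : (4*n+2+1) / 4 = n := by omega
    have m1 : (4*n) % 4 = 0 := by omega
    have m2 : (4*n+1) % 4 = 1 := by omega
    have m3 : (4*n+1+1) % 4 = 2 := by omega
    have m4 : (4*n+2+1) % 4 = 3 := by omega
    rw [d1, d2, d3, d4, m1, m2, m3, m4]
    push_cast
    refine ⟨by ring, by ring, by ring⟩
  · rw [ha (8*n+3), ha (8*n)]
    have d1 : (8*n+3+1) / 4 = 2*n+1 := by omega
    have d2 : (8*n+1) / 4 = 2*n := by omega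
    have m1 : (8*n+3+1) % 4 = 0 := by omega
    have m2 : (8*n+1) % 4 = 1 := by omega
    rw [d1, d2, m1, m2, hbo n, hbe n]
    push_cast
    ring
  · rw [ha (8*n+7), ha (4*n+3)]
    have d1 : (8*n+7+1) / 4 = 2*(n+1) := by omega
    have d2 : (4*n+3+1) / 4 = n+1 := by omega
    have m1 : (8*n+7+1) % 4 = 0 := by omega
    have m2 : (4*n+3+1) % 4 = 0 := by omega
    rw [d1, d2, m1, m2, hbe (n+1)]
    push_cast
    ring
end

section
/- Let a_n be the n-th element (in increasing order, starting a_1 = 1) of the set {m ≥ 1 : c_m = 1}, and a_0 = 0. Then a_{4k+r} = 4 b_k + r for r ∈ {−1,0,1,2} with 4k+r ≥ 1, where b_0 = 0, b_{2n} = 4 b_n, b_{2n+1} = 4 b_n + 2. -/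
set_option maxHeartbeats 1000000 in
/-- If `a` enumerates `{m ≥ 1 : c_m = 1}` in increasing order (with `a₀ = 0`,
`a_{n+1}` the `n`-th element), then `a_{4k+r} = 4b_k + r` for `r ∈ {−1,0,1,2}`
with `4k + r ≥ 1`. -/
theorem a_eq_four_b (c : ℕ → ZMod 2) (hc0 : c 0 = 0) (hc1 : c 1 = 1) (hc2 : c 2 = 1) (hc3 : c 3 = 0)
    (h40 : ∀ n : ℕ, 1 ≤ n → c (4 * n) = c (4 * n - 1))
    (h41 : ∀ n : ℕ, 1 ≤ n → c (4 * n + 1) = c (4 * n - 1))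
    (h42 : ∀ n : ℕ, 1 ≤ n → c (4 * n + 2) = c (4 * n - 1))
    (h43 : ∀ n : ℕ, 1 ≤ n → c (4 * n + 3) = c (4 * n - 1) + c n)
    (a : ℕ → ℕ) (ha0 : a 0 = 0)
    (ha : ∀ n : ℕ, a (n + 1) = Nat.nth (fun m => 1 ≤ m ∧ c m = 1) n)
    (b : ℕ → ℕ) (hb0 : b 0 = 0)
    (hbe : ∀ n, b (2 * n) = 4 * b n) (hbo : ∀ n, b (2 * n + 1) = 4 * b n + 2) :
    ∀ k : ℕ, ∀ r : ℤ, -1 ≤ r → r ≤ 2 → 1 ≤ 4 * (k : ℤ) + r →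
      ((a (4 * (k : ℤ) + r).toNat : ℤ)) = 4 * (b k : ℤ) + r := by
  classical
  -- closed form for b
  have hbcf : ∀ j, b j = 4 * b (j / 2) + 2 * (j % 2) := by
    intro j
    rcases Nat.even_or_odd j with ⟨t, ht⟩ | ⟨t, ht⟩
    · rw [show j = 2 * t by omega, hbe]
      have h1 : 2 * t / 2 = t := by omega
      have h2 : 2 * t % 2 = 0 := by omega
      rw [h1, h2]
      omega
    · rw [show j = 2 * t + 1 by omega, hbo]
      have h1 : (2 * t + 1) / 2 = t := by omega
      have h2 : (2 * t + 1) % 2 = 1 := by omega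
      rw [h1, h2]
  have hbmod : ∀ j, b j % 4 = 0 ∨ b j % 4 = 2 := by
    intro j; have := hbcf j; omega
  have hBmod : ∀ x, (∃ j, b j = x) → x % 4 = 0 ∨ x % 4 = 2 := by
    rintro x ⟨j, rfl⟩; exact hbmod j
  have hB4 : ∀ m, (∃ j, b j = 4 * m) ↔ (∃ j, b j = m) := by
    intro m
    constructor
    · rintro ⟨j, hj⟩; have := hbcf j; exact ⟨j / 2, by omega⟩
    · rintro ⟨j, hj⟩; exact ⟨2 * j, by rw [hbe]; omega⟩
  have hB42 : ∀ m, (∃ j, b j = 4 * m + 2) ↔ (∃ j, b j = m) := by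
    intro m
    constructor
    · rintro ⟨j, hj⟩; have := hbcf j; exact ⟨j / 2, by omega⟩
    · rintro ⟨j, hj⟩; exact ⟨2 * j + 1, by rw [hbo]; omega⟩
  have hB0 : ∃ j, b j = 0 := ⟨0, hb0⟩
  -- the XOR fact about the set B
  have hX : ∀ m, (∃ j, b j = m + 1) ↔
      ¬ ((∃ j, b j = m) ↔ (∃ j, b j = (m + 1) / 4)) := by
    intro m
    obtain ⟨t, hcs⟩ : ∃ t, m = 4 * t ∨ m = 4 * t + 1 ∨ m = 4 * t + 2 ∨ m = 4 * t + 3 :=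
      ⟨m / 4, by omega⟩
    rcases hcs with rfl | rfl | rfl | rfl
    · have e1 : (∃ j, b j = 4 * t) ↔ (∃ j, b j = t) := hB4 t
      have e2 : ¬ (∃ j, b j = 4 * t + 1) := fun hh => by have := hBmod _ hh; omega
      rw [show (4 * t + 1) / 4 = t by omega]
      tauto
    · have e1 : ¬ (∃ j, b j = 4 * t + 1) := fun hh => by have := hBmod _ hh; omega
      have e2 : (∃ j, b j = 4 * t + 1 + 1) ↔ (∃ j, b j = t) := by
        rw [show 4 * t + 1 + 1 = 4 * t + 2 by omega]; exact hB42 t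
      rw [show (4 * t + 1 + 1) / 4 = t by omega]
      tauto
    · have e1 : (∃ j, b j = 4 * t + 2) ↔ (∃ j, b j = t) := hB42 t
      have e2 : ¬ (∃ j, b j = 4 * t + 2 + 1) := fun hh => by have := hBmod _ hh; omega
      rw [show (4 * t + 2 + 1) / 4 = t by omega]
      tauto
    · have e1 : ¬ (∃ j, b j = 4 * t + 3) := fun hh => by have := hBmod _ hh; omega
      have e2 : (∃ j, b j = 4 * t + 3 + 1) ↔ (∃ j, b j = t + 1) := by
        rw [show 4 * t + 3 + 1 = 4 * (t + 1) by omega]; exact hB4 (t + 1)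
      rw [show (4 * t + 3 + 1) / 4 = t + 1 by omega]
      tauto
  -- characterization of c
  have hchar : ∀ m, 1 ≤ m → (c m = 1 ↔ ∃ j, b j = (m + 1) / 4) := by
    intro m
    induction m using Nat.strong_induction_on with
    | _ m IH =>
      intro hm
      have hz : ∀ x y : ZMod 2, (x + y = 1) ↔ ¬ ((x = 1) ↔ (y = 1)) := by decide
      rcases Nat.lt_or_ge m 4 with h4 | h4
      · interval_cases m
        · rw [show (1 + 1) / 4 = 0 from rfl]
          exact iff_of_true hc1 hB0
        · rw [show (2 + 1) / 4 = 0 from rfl]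
          exact iff_of_true hc2 hB0
        · rw [show (3 + 1) / 4 = 1 from rfl, hc3]
          constructor
          · intro hh; exact absurd hh (by decide)
          · intro hh; have := hBmod _ hh; omega
      · obtain ⟨q, hq1, hcase⟩ : ∃ q, 1 ≤ q ∧ (m = 4 * q ∨ m = 4 * q + 1 ∨ m = 4 * q + 2 ∨
            m = 4 * q + 3) := ⟨m / 4, by omega, by omega⟩
        rcases hcase with rfl | rfl | rfl | rfl
        · rw [h40 q hq1]
          have h1 := IH (4 * q - 1) (by omega) (by omega)
          rw [show (4 * q - 1 + 1) / 4 = q by omega] at h1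
          rw [show (4 * q + 1) / 4 = q by omega]
          exact h1
        · rw [h41 q hq1]
          have h1 := IH (4 * q - 1) (by omega) (by omega)
          rw [show (4 * q - 1 + 1) / 4 = q by omega] at h1
          rw [show (4 * q + 1 + 1) / 4 = q by omega]
          exact h1
        · rw [h42 q hq1]
          have h1 := IH (4 * q - 1) (by omega) (by omega)
          rw [show (4 * q - 1 + 1) / 4 = q by omega] at h1
          rw [show (4 * q + 2 + 1) / 4 = q by omega]
          exact h1
        · rw [h43 q hq1, hz]
          have h1 := IH (4 * q - 1) (by omega) (by omega)
          rw [show (4 * q - 1 + 1) / 4 = q by omega] at h1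
          have h2 := IH q (by omega) hq1
          have h3 := hX q
          rw [show (4 * q + 3 + 1) / 4 = q + 1 by omega]
          tauto
  -- monotonicity of b
  have hmono : StrictMono b := by
    apply strictMono_nat_of_lt_succ
    intro n
    induction n using Nat.strong_induction_on with
    | _ n IH =>
      rcases Nat.even_or_odd n with ⟨t, ht⟩ | ⟨t, ht⟩
      · rw [show n = 2 * t by omega, show 2 * t + 1 = 2 * t + 1 from rfl, hbe, hbo]
        omega
      · have hlt : b t < b (t + 1) := IH t (by omega)
        rw [show n = 2 * t + 1 by omega, hbo, show 2 * t + 1 + 1 = 2 * (t + 1) by omega, hbe]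
        omega
  have hbk2 : ∀ k, 2 ≤ b (k + 1) := by
    intro k
    have h1 : b 1 = 2 := by have h := hbo 0; rw [hb0] at h; simpa using h
    have h2 : b 1 ≤ b (k + 1) := hmono.monotone (by omega)
    omega
  haveI hdec : DecidablePred (fun m => 1 ≤ m ∧ c m = 1) := Classical.decPred _
  -- count is constant on gaps
  have hconst : ∀ (x d : ℕ), (∀ i, x ≤ i → i < x + d → ¬ (1 ≤ i ∧ c i = 1)) →
      Nat.count (fun m => 1 ≤ m ∧ c m = 1) (x + d) =
        Nat.count (fun m => 1 ≤ m ∧ c m = 1) x := by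
    intro x d
    induction d with
    | zero => intro _; rfl
    | succ d ih =>
      intro hno
      rw [show x + (d + 1) = (x + d) + 1 by omega, Nat.count_succ,
        if_neg (hno (x + d) (by omega) (by omega)), Nat.add_zero,
        ih (fun i h1 h2 => hno i h1 (by omega))]
  -- block membership
  have hPblk : ∀ k t, t ≤ 3 → (1 ≤ 4 * b (k + 1) - 1 + t ∧ c (4 * b (k + 1) - 1 + t) = 1) := by
    intro k t ht
    have h2 := hbk2 k
    refine ⟨by omega, ?_⟩
    rw [hchar _ (by omega), show (4 * b (k + 1) - 1 + t + 1) / 4 = b (k + 1) by omega]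
    exact ⟨k + 1, rfl⟩
  -- gap between blocks
  have hgapk : ∀ k, Nat.count (fun m => 1 ≤ m ∧ c m = 1) (4 * b (k + 1) - 1) =
      Nat.count (fun m => 1 ≤ m ∧ c m = 1) (4 * b k + 3) := by
    intro k
    have h2 := hbk2 k
    have hlt : b k < b (k + 1) := hmono (by omega)
    have h := hconst (4 * b k + 3) (4 * b (k + 1) - 1 - (4 * b k + 3)) ?_
    · rw [show 4 * b k + 3 + (4 * b (k + 1) - 1 - (4 * b k + 3)) = 4 * b (k + 1) - 1 by omega] at h
      exact h
    · intro i h1 h2' hPi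
      rw [hchar _ hPi.1] at hPi
      obtain ⟨-, j, hj⟩ := hPi
      have hj1 : b k < b j := by omega
      have hj2 : b j < b (k + 1) := by omega
      have := hmono.lt_iff_lt.mp hj1
      have := hmono.lt_iff_lt.mp hj2
      omega
  -- small counts
  have e1 : Nat.count (fun m => 1 ≤ m ∧ c m = 1) 1 = 0 := by
    have h := Nat.count_succ (p := fun m => 1 ≤ m ∧ c m = 1) 0
    rw [Nat.count_zero, if_neg (fun hh => absurd hh.1 (by omega) : ¬ (1 ≤ 0 ∧ c 0 = 1))] at h
    simpa using h
  have e2 : Nat.count (fun m => 1 ≤ m ∧ c m = 1) 2 = 1 := by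
    have h := Nat.count_succ (p := fun m => 1 ≤ m ∧ c m = 1) 1
    rw [e1, if_pos (⟨le_refl 1, hc1⟩ : 1 ≤ 1 ∧ c 1 = 1)] at h
    simpa using h
  have e3 : Nat.count (fun m => 1 ≤ m ∧ c m = 1) 3 = 2 := by
    have h := Nat.count_succ (p := fun m => 1 ≤ m ∧ c m = 1) 2
    rw [e2, if_pos (⟨by omega, hc2⟩ : 1 ≤ 2 ∧ c 2 = 1)] at h
    simpa using h
  -- count of the blocks
  have hG : ∀ k, Nat.count (fun m => 1 ≤ m ∧ c m = 1) (4 * b k + 3) = 4 * k + 2 := by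
    intro k
    induction k with
    | zero =>
      rw [hb0]
      simpa using e3
    | succ k ih =>
      have h2 := hbk2 k
      have ec : Nat.count (fun m => 1 ≤ m ∧ c m = 1) (4 * b (k + 1) - 1) = 4 * k + 2 := by
        rw [hgapk k, ih]
      have s0 := hPblk k 0 (by omega)
      simp only [Nat.add_zero] at s0
      have s1 := hPblk k 1 (by omega)
      have s2 := hPblk k 2 (by omega)
      have s3 := hPblk k 3 (by omega)
      rw [show 4 * b (k + 1) + 3 = (4 * b (k + 1) - 1 + 3) + 1 by omega, Nat.count_succ,
        if_pos s3,
        show 4 * b (k + 1) - 1 + 3 = (4 * b (k + 1) - 1 + 2) + 1 by omega, Nat.count_succ,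
        if_pos s2,
        show 4 * b (k + 1) - 1 + 2 = (4 * b (k + 1) - 1 + 1) + 1 by omega, Nat.count_succ,
        if_pos s1, Nat.count_succ, if_pos s0, ec]
      omega
  -- counts within a block
  have hcountblk : ∀ k t, t ≤ 3 →
      Nat.count (fun m => 1 ≤ m ∧ c m = 1) (4 * b (k + 1) - 1 + t) = 4 * k + 2 + t := by
    intro k t
    induction t with
    | zero =>
      intro _
      rw [show 4 * b (k + 1) - 1 + 0 = 4 * b (k + 1) - 1 by omega, hgapk k, hG k]
    | succ t iht =>
      intro ht
      rw [show 4 * b (k + 1) - 1 + (t + 1) = (4 * b (k + 1) - 1 + t) + 1 by omega,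
        Nat.count_succ, if_pos (hPblk k t (by omega)), iht (by omega)]
      omega
  -- nth values for blocks
  have hnthblk : ∀ k t, t ≤ 3 →
      Nat.nth (fun m => 1 ≤ m ∧ c m = 1) (4 * k + 2 + t) = 4 * b (k + 1) - 1 + t := by
    intro k t ht
    have h := Nat.nth_count (p := fun m => 1 ≤ m ∧ c m = 1) (hPblk k t ht)
    rwa [hcountblk k t ht] at h
  -- nth values 0 and 1
  have hnth0 : Nat.nth (fun m => 1 ≤ m ∧ c m = 1) 0 = 1 := by
    have h := Nat.nth_count (p := fun m => 1 ≤ m ∧ c m = 1)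
      (⟨le_refl 1, hc1⟩ : 1 ≤ 1 ∧ c 1 = 1)
    rwa [e1] at h
  have hnth1 : Nat.nth (fun m => 1 ≤ m ∧ c m = 1) 1 = 2 := by
    have h := Nat.nth_count (p := fun m => 1 ≤ m ∧ c m = 1)
      (⟨by omega, hc2⟩ : 1 ≤ 2 ∧ c 2 = 1)
    rwa [e2] at h
  -- final assembly
  intro k r hr1 hr2 hkr
  obtain ⟨n, hnval⟩ : ∃ n : ℕ, (n : ℤ) = 4 * (k : ℤ) + r :=
    ⟨_, Int.toNat_of_nonneg (by omega)⟩
  rw [← hnval, Int.toNat_natCast]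
  obtain ⟨i, rfl⟩ : ∃ i, n = i + 1 := ⟨n - 1, by omega⟩
  rw [ha i]
  rcases k with _ | j
  · have hi : i = 0 ∨ i = 1 := by omega
    rcases hi with rfl | rfl
    · rw [hnth0, hb0]
      push_cast at hnval ⊢
      omega
    · rw [hnth1, hb0]
      push_cast at hnval ⊢
      omega
  · have h2 := hbk2 j
    have hts : (r + 1).toNat ≤ 3 := by omega
    have hie : i = 4 * j + 2 + (r + 1).toNat := by
      push_cast at hnval
      omega
    rw [hie, hnthblk j _ hts]
    push_cast
    omega
end

section
/- For the increasing sequence (a_n) enumerating {m ≥ 1 : c_m = 1} (with a_0 = 0), the set of all consecutive differences {a_n − a_{n−1} : n ≥ 1} equals {(4^m − 1)/3 : m ≥ 1}. Moreover a_n − a_{n−1} = 1 iff n ≡ 0, 1, or 2 (mod 4), and for m ≥ 2, a_n − a_{n−1} = (4^m − 1)/3 iff n = 2^{m+1} k + 2^m − 1 for some k ≥ 0. -/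
/-!
Solving the recursion: `c m = 1` exactly when `m ≥ 1` and `⌈m / 2⌉` is a sum of distinct powers
of `4`, i.e. lies in the range of the map `φ` reading binary digits in base `4` (the
Moser–de Bruijn sequence); this indicator satisfies the recursion, which determines `c`.
Hence `a (2t) = 2 φ(t)` and `a (2t - 1) = 2 φ(t) - 1`, so the differences at even indices are `1`.
At an odd index `2t + 1`, write `t + 1 = 2^e (2k + 1)`: then `t` ends in `e` binary ones, so
`φ(t + 1) - φ(t) = 4^e - (4^e - 1) / 3` and the difference is `(4^(e+1) - 1) / 3`.
The three claims follow because `m ↦ (4^m - 1) / 3` is injective.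
-/

open Set

theorem Nat.nth_eq_of_strictMono {p : ℕ → Prop} {f : ℕ → ℕ} (hf : StrictMono f)
    (hp : ∀ m, p m ↔ m ∈ range f) : Nat.nth p = f := by
  have hinf : {m | p m}.Infinite := by
    rw [show {m | p m} = range f from Set.ext hp]
    exact Set.infinite_range_of_injective hf.injective
  funext n
  have := Nat.nth_comp_of_strictMono (n := n) hf (fun k hk => (hp k).1 hk)
    (fun hfin => absurd hfin hinf)
  rwa [Nat.nth_of_forall fun k _ => (hp _).2 ⟨k, rfl⟩, eq_comm] at this

theorem four_pow_sub_one_div_three_mul_three_add_one (m : ℕ) :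
    (4 ^ m - 1) / 3 * 3 + 1 = 4 ^ m := by
  have h3 : 3 ∣ 4 ^ m - 1 := by simpa using Nat.sub_dvd_pow_sub_pow 4 1 m
  have : 1 ≤ 4 ^ m := Nat.one_le_pow _ _ (by norm_num)
  omega

theorem four_pow_sub_one_div_three_injective :
    Function.Injective fun m : ℕ => (4 ^ m - 1) / 3 := by
  intro m m' h
  apply Nat.pow_right_injective (by norm_num : 2 ≤ 4)
  have := four_pow_sub_one_div_three_mul_three_add_one m
  have := four_pow_sub_one_div_three_mul_three_add_one m'
  simp only at h ⊢
  omega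

def moserDeBruijn (n : ℕ) : ℕ := Nat.ofDigits 4 (Nat.digits 2 n)

@[simp]
theorem moserDeBruijn_zero : moserDeBruijn 0 = 0 := rfl

theorem moserDeBruijn_two_mul_add (n : ℕ) {b : ℕ} (hb : b < 2) :
    moserDeBruijn (2 * n + b) = 4 * moserDeBruijn n + b := by
  rcases Nat.eq_zero_or_pos n with rfl | hn
  · interval_cases b <;> rfl
  · rw [moserDeBruijn, add_comm, Nat.digits_add 2 one_lt_two b n hb (Or.inr hn.ne'),
      Nat.ofDigits_cons, moserDeBruijn]
    ring

theorem moserDeBruijn_strictMono : StrictMono moserDeBruijn := by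
  refine strictMono_nat_of_lt_succ fun n => ?_
  induction n using Nat.evenOddRec with
  | h0 => decide
  | h_even n _ =>
    have := moserDeBruijn_two_mul_add n two_pos
    rw [add_zero] at this
    rw [this, moserDeBruijn_two_mul_add n one_lt_two]
    omega
  | h_odd n ih =>
    rw [moserDeBruijn_two_mul_add n one_lt_two, show 2 * n + 1 + 1 = 2 * (n + 1) + 0 by ring,
      moserDeBruijn_two_mul_add _ two_pos]
    omega

theorem moserDeBruijn_pos {k : ℕ} (hk : 0 < k) : 0 < moserDeBruijn k :=
  moserDeBruijn_zero ▸ moserDeBruijn_strictMono hk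

theorem moserDeBruijn_two_pow_mul_add (e q : ℕ) {r : ℕ} (hr : r < 2 ^ e) :
    moserDeBruijn (2 ^ e * q + r) = 4 ^ e * moserDeBruijn q + moserDeBruijn r := by
  induction e generalizing r with
  | zero => simp_all
  | succ e ih =>
    obtain ⟨r', b, hb, rfl⟩ : ∃ r' b, b < 2 ∧ r = 2 * r' + b :=
      ⟨r / 2, r % 2, r.mod_lt two_pos, (r.div_add_mod 2).symm⟩
    rw [show 2 ^ (e + 1) * q + (2 * r' + b) = 2 * (2 ^ e * q + r') + b by ring,
      moserDeBruijn_two_mul_add _ hb, moserDeBruijn_two_mul_add _ hb,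
      ih (by rw [pow_succ] at hr; omega)]
    ring

theorem moserDeBruijn_two_pow_sub_one (e : ℕ) : moserDeBruijn (2 ^ e - 1) = (4 ^ e - 1) / 3 := by
  induction e with
  | zero => rfl
  | succ e ih =>
    have : 1 ≤ 2 ^ e := Nat.one_le_two_pow
    rw [show 2 ^ (e + 1) - 1 = 2 * (2 ^ e - 1) + 1 by rw [pow_succ]; omega,
      moserDeBruijn_two_mul_add _ one_lt_two, ih]
    have := four_pow_sub_one_div_three_mul_three_add_one e
    have := four_pow_sub_one_div_three_mul_three_add_one (e + 1)
    rw [pow_succ] at *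
    omega

theorem mem_range_moserDeBruijn_iff (x : ℕ) :
    x ∈ range moserDeBruijn ↔ x % 4 < 2 ∧ x / 4 ∈ range moserDeBruijn := by
  constructor
  · rintro ⟨k, rfl⟩
    rw [← Nat.div_add_mod k 2, moserDeBruijn_two_mul_add _ (k.mod_lt two_pos)]
    exact ⟨by omega, k / 2, by omega⟩
  · rintro ⟨hx, j, hj⟩
    refine ⟨2 * j + x % 4, ?_⟩
    rw [moserDeBruijn_two_mul_add _ hx, hj]
    omega

theorem two_mul_mem_range_moserDeBruijn_iff (x : ℕ) :
    2 * x ∈ range moserDeBruijn ↔ x % 2 = 0 ∧ x / 2 ∈ range moserDeBruijn := by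
  rw [mem_range_moserDeBruijn_iff (2 * x), show 2 * x / 4 = x / 2 by omega]
  exact and_congr (by omega) Iff.rfl

theorem two_mul_add_one_mem_range_moserDeBruijn_iff (x : ℕ) :
    2 * x + 1 ∈ range moserDeBruijn ↔ 2 * x ∈ range moserDeBruijn := by
  rw [mem_range_moserDeBruijn_iff (2 * x + 1), mem_range_moserDeBruijn_iff (2 * x),
    show (2 * x + 1) / 4 = 2 * x / 4 by omega]
  exact and_congr (by omega) Iff.rfl

structure IsInverseThueMorse (c : ℕ → ZMod 2) : Prop where
  zero : c 0 = 0
  one : c 1 = 1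
  two : c 2 = 1
  three : c 3 = 0
  four_mul : ∀ n, 1 ≤ n → c (4 * n) = c (4 * n - 1)
  four_mul_add_one : ∀ n, 1 ≤ n → c (4 * n + 1) = c (4 * n - 1)
  four_mul_add_two : ∀ n, 1 ≤ n → c (4 * n + 2) = c (4 * n - 1)
  four_mul_add_three : ∀ n, 1 ≤ n → c (4 * n + 3) = c (4 * n - 1) + c n

theorem IsInverseThueMorse.unique {c d : ℕ → ZMod 2} (hc : IsInverseThueMorse c)
    (hd : IsInverseThueMorse d) : c = d := by
  funext m
  induction m using Nat.strong_induction_on with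
  | _ m ih =>
    obtain ⟨n, r, hr, rfl⟩ : ∃ n r, r < 4 ∧ m = 4 * n + r :=
      ⟨m / 4, m % 4, m.mod_lt (by norm_num), (m.div_add_mod 4).symm⟩
    rcases Nat.eq_zero_or_pos n with rfl | hn
    · interval_cases r
      exacts [hc.zero.trans hd.zero.symm, hc.one.trans hd.one.symm,
        hc.two.trans hd.two.symm, hc.three.trans hd.three.symm]
    · have hprev := ih (4 * n - 1) (by omega)
      interval_cases r
      · rw [add_zero, hc.four_mul n hn, hd.four_mul n hn, hprev]
      · rw [hc.four_mul_add_one n hn, hd.four_mul_add_one n hn, hprev]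
      · rw [hc.four_mul_add_two n hn, hd.four_mul_add_two n hn, hprev]
      · rw [hc.four_mul_add_three n hn, hd.four_mul_add_three n hn, hprev, ih n (by omega)]

namespace InverseThueMorse

def support : Set ℕ := {m | 1 ≤ m ∧ (m + 1) / 2 ∈ range moserDeBruijn}

open Classical in
theorem indicator_support_apply {m : ℕ} (hm : 1 ≤ m) :
    support.indicator (1 : ℕ → ZMod 2) m =
      if (m + 1) / 2 ∈ range moserDeBruijn then 1 else 0 := by
  simp only [support, Set.indicator_apply, mem_ofPred_eq, hm, true_and, Pi.one_apply]

theorem isInverseThueMorse_indicator_support :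
    IsInverseThueMorse (support.indicator 1) where
  zero := by simp [support]
  one := by rw [indicator_support_apply le_rfl, if_pos ⟨1, rfl⟩]
  two := by rw [indicator_support_apply (by norm_num), if_pos ⟨1, rfl⟩]
  three := by
    rw [indicator_support_apply (by norm_num), if_neg]
    rw [show (3 + 1) / 2 = 2 * 1 by rfl, two_mul_mem_range_moserDeBruijn_iff]
    exact fun h => absurd h.1 (by decide)
  four_mul n hn := by
    rw [indicator_support_apply (by omega), indicator_support_apply (by omega),
      show (4 * n + 1) / 2 = (4 * n - 1 + 1) / 2 by omega]
  four_mul_add_one n hn := by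
    rw [indicator_support_apply (by omega), indicator_support_apply (by omega),
      show (4 * n + 1 + 1) / 2 = 2 * n + 1 by omega, show (4 * n - 1 + 1) / 2 = 2 * n by omega,
      two_mul_add_one_mem_range_moserDeBruijn_iff]
  four_mul_add_two n hn := by
    rw [indicator_support_apply (by omega), indicator_support_apply (by omega),
      show (4 * n + 2 + 1) / 2 = 2 * n + 1 by omega, show (4 * n - 1 + 1) / 2 = 2 * n by omega,
      two_mul_add_one_mem_range_moserDeBruijn_iff]
  four_mul_add_three n hn := by
    rw [indicator_support_apply (by omega), indicator_support_apply (by omega),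
      indicator_support_apply hn, show (4 * n + 3 + 1) / 2 = 2 * (n + 1) by omega,
      show (4 * n - 1 + 1) / 2 = 2 * n by omega, two_mul_mem_range_moserDeBruijn_iff,
      two_mul_mem_range_moserDeBruijn_iff]
    obtain ⟨u, rfl | rfl⟩ := Nat.even_or_odd' n
    · rw [show (2 * u + 1) / 2 = u by omega, show (2 * u) / 2 = u by omega]
      by_cases hu : u ∈ range moserDeBruijn <;> simp [hu, CharTwo.add_self_eq_zero]
    · rw [show (2 * u + 1 + 1) / 2 = u + 1 by omega]
      by_cases hu : u + 1 ∈ range moserDeBruijn <;> simp [hu, Nat.add_mod]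

def enum (n : ℕ) : ℕ := 2 * moserDeBruijn ((n + 1) / 2) - n % 2

theorem enum_zero : enum 0 = 0 := rfl

theorem enum_two_mul (t : ℕ) : enum (2 * t) = 2 * moserDeBruijn t := by
  rw [enum, show (2 * t + 1) / 2 = t by omega, Nat.mul_mod_right, Nat.sub_zero]

theorem enum_two_mul_add_one (t : ℕ) : enum (2 * t + 1) = 2 * moserDeBruijn (t + 1) - 1 := by
  rw [enum, show (2 * t + 1 + 1) / 2 = t + 1 by omega, Nat.mul_add_mod_self_left]

theorem enum_strictMono : StrictMono enum := by
  refine strictMono_nat_of_lt_succ fun n => ?_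
  obtain ⟨t, rfl | rfl⟩ := Nat.even_or_odd' n
  · rw [enum_two_mul, enum_two_mul_add_one]
    have := moserDeBruijn_strictMono (lt_add_one t)
    omega
  · rw [enum_two_mul_add_one, show 2 * t + 1 + 1 = 2 * (t + 1) by ring, enum_two_mul]
    have := moserDeBruijn_pos (Nat.add_one_pos t)
    omega

theorem mem_support_iff (m : ℕ) : m ∈ support ↔ ∃ n, enum (n + 1) = m := by
  constructor
  · rintro ⟨hm, k, hk⟩
    have hk0 : 0 < k := Nat.pos_of_ne_zero fun h => by simp [h] at hk; omega
    refine ⟨2 * k - m % 2 - 1, ?_⟩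
    rw [enum, show (2 * k - m % 2 - 1 + 1 + 1) / 2 = k by omega,
      show (2 * k - m % 2 - 1 + 1) % 2 = m % 2 by omega]
    omega
  · rintro ⟨n, rfl⟩
    refine ⟨?_, (n + 1 + 1) / 2, ?_⟩
    · exact (enum_zero ▸ enum_strictMono n.succ_pos :)
    · have := moserDeBruijn_pos (show 0 < (n + 1 + 1) / 2 by omega)
      rw [enum]
      omega

theorem eq_enum {c : ℕ → ZMod 2} (hc : IsInverseThueMorse c) {a : ℕ → ℕ} (ha0 : a 0 = 0)
    (ha : ∀ n, a (n + 1) = Nat.nth (fun m => 1 ≤ m ∧ c m = 1) n) : a = enum := by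
  have hp (m : ℕ) : (1 ≤ m ∧ c m = 1) ↔ m ∈ range fun n => enum (n + 1) := by
    rw [hc.unique isInverseThueMorse_indicator_support, indicator_eq_one_iff_mem, mem_range,
      ← mem_support_iff]
    exact and_iff_right_of_imp fun hm => hm.1
  have hnth := Nat.nth_eq_of_strictMono (enum_strictMono.comp (strictMono_id.add_const 1)) hp
  funext n
  cases n with
  | zero => exact ha0
  | succ n => rw [ha, hnth]; rfl

theorem enum_sub_enum_of_even {n : ℕ} (hn : Even n) (hn0 : n ≠ 0) :
    enum n - enum (n - 1) = 1 := by
  obtain ⟨t, rfl⟩ : ∃ t, n = 2 * (t + 1) := ⟨n / 2 - 1, by rcases hn with ⟨j, rfl⟩; omega⟩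
  rw [enum_two_mul, show 2 * (t + 1) - 1 = 2 * t + 1 by omega, enum_two_mul_add_one]
  have := moserDeBruijn_pos (Nat.add_one_pos t)
  omega

theorem enum_sub_enum_of_succ_eq {m n k : ℕ} (hm : m ≠ 0) (h : n + 1 = 2 ^ m * (2 * k + 1)) :
    enum n - enum (n - 1) = (4 ^ m - 1) / 3 := by
  obtain ⟨e, rfl⟩ := Nat.exists_eq_succ_of_ne_zero hm
  have h2e : 1 ≤ 2 ^ e := Nat.one_le_two_pow
  have h' : n + 1 = 2 * (2 ^ e * (2 * k + 1)) := by rw [h, pow_succ]; ring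
  obtain ⟨t, rfl⟩ : ∃ t, n = 2 * t + 1 := ⟨n / 2, by omega⟩
  have ht : t + 1 = 2 ^ e * (2 * k + 1) := by omega
  have hφt : moserDeBruijn t = 4 ^ e * (4 * moserDeBruijn k) + (4 ^ e - 1) / 3 := by
    rw [show t = 2 ^ e * (2 * k + 0) + (2 ^ e - 1) by rw [add_zero]; lia,
      moserDeBruijn_two_pow_mul_add _ _ (by omega), moserDeBruijn_two_mul_add _ two_pos,
      moserDeBruijn_two_pow_sub_one, add_zero]
  have hφt1 : moserDeBruijn (t + 1) = 4 ^ e * (4 * moserDeBruijn k) + 4 ^ e := by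
    rw [ht, ← add_zero (2 ^ e * _), moserDeBruijn_two_pow_mul_add _ _ (Nat.two_pow_pos e),
      moserDeBruijn_two_mul_add _ one_lt_two, moserDeBruijn_zero]
    ring
  rw [show 2 * t + 1 - 1 = 2 * t by omega, enum_two_mul_add_one, enum_two_mul, hφt1, hφt]
  have := four_pow_sub_one_div_three_mul_three_add_one e
  have := four_pow_sub_one_div_three_mul_three_add_one (e + 1)
  rw [pow_succ] at *
  omega

theorem exists_succ_eq_two_pow_mul_of_odd {n : ℕ} (hn : Odd n) :
    ∃ m k, m ≠ 0 ∧ n + 1 = 2 ^ m * (2 * k + 1) := by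
  obtain ⟨m, q, ⟨k, rfl⟩, h⟩ := Nat.exists_eq_two_pow_mul_odd n.succ_ne_zero
  refine ⟨m, k, ?_, h⟩
  rintro rfl
  rcases hn with ⟨j, rfl⟩
  omega

theorem exists_enum_sub_enum_eq {n : ℕ} (hn : n ≠ 0) :
    ∃ m, 1 ≤ m ∧ enum n - enum (n - 1) = (4 ^ m - 1) / 3 := by
  rcases Nat.even_or_odd n with he | ho
  · exact ⟨1, le_rfl, enum_sub_enum_of_even he hn⟩
  · obtain ⟨m, k, hm, h⟩ := exists_succ_eq_two_pow_mul_of_odd ho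
    exact ⟨m, Nat.one_le_iff_ne_zero.2 hm, enum_sub_enum_of_succ_eq hm h⟩

theorem enum_sub_enum_eq_iff {m n : ℕ} (hm : m ≠ 0) (hn : n ≠ 0) :
    enum n - enum (n - 1) = (4 ^ m - 1) / 3 ↔
      (m = 1 ∧ Even n) ∨ ∃ k, n + 1 = 2 ^ m * (2 * k + 1) := by
  refine ⟨fun h => ?_, ?_⟩
  · rcases Nat.even_or_odd n with he | ho
    · refine .inl ⟨four_pow_sub_one_div_three_injective ?_, he⟩
      exact h.symm.trans (enum_sub_enum_of_even he hn)
    · obtain ⟨e, k, he, hk⟩ := exists_succ_eq_two_pow_mul_of_odd ho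
      have hem : e = m :=
        four_pow_sub_one_div_three_injective ((enum_sub_enum_of_succ_eq he hk).symm.trans h)
      exact .inr ⟨k, hem ▸ hk⟩
  · rintro (⟨rfl, he⟩ | ⟨k, hk⟩)
    · exact enum_sub_enum_of_even he hn
    · exact enum_sub_enum_of_succ_eq hm hk

end InverseThueMorse

open InverseThueMorse in
/-- Consecutive differences of the increasing enumeration `a` of
`{m ≥ 1 : c_m = 1}` (with `a₀ = 0`): the set of differences is
`{(4^m − 1)/3 : m ≥ 1}`; the difference is `1` iff `n ≡ 0,1,2 (mod 4)`; and
for `m ≥ 2` it equals `(4^m − 1)/3` iff `n = 2^{m+1}k + 2^m − 1`. -/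
theorem a_differences (c : ℕ → ZMod 2) (hc0 : c 0 = 0) (hc1 : c 1 = 1) (hc2 : c 2 = 1) (hc3 : c 3 = 0)
    (h40 : ∀ n : ℕ, 1 ≤ n → c (4 * n) = c (4 * n - 1))
    (h41 : ∀ n : ℕ, 1 ≤ n → c (4 * n + 1) = c (4 * n - 1))
    (h42 : ∀ n : ℕ, 1 ≤ n → c (4 * n + 2) = c (4 * n - 1))
    (h43 : ∀ n : ℕ, 1 ≤ n → c (4 * n + 3) = c (4 * n - 1) + c n)
    (a : ℕ → ℕ) (ha0 : a 0 = 0)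
    (ha : ∀ n : ℕ, a (n + 1) = Nat.nth (fun m => 1 ≤ m ∧ c m = 1) n) :
    ({x : ℕ | ∃ n : ℕ, 1 ≤ n ∧ x = a n - a (n - 1)} =
      {x : ℕ | ∃ m : ℕ, 1 ≤ m ∧ x = (4 ^ m - 1) / 3}) ∧
    (∀ n : ℕ, 1 ≤ n →
      (a n - a (n - 1) = 1 ↔ n % 4 = 0 ∨ n % 4 = 1 ∨ n % 4 = 2)) ∧
    (∀ m : ℕ, 2 ≤ m → ∀ n : ℕ, 1 ≤ n →
      (a n - a (n - 1) = (4 ^ m - 1) / 3 ↔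
        ∃ k : ℕ, n = 2 ^ (m + 1) * k + 2 ^ m - 1)) := by
  obtain rfl : a = enum := eq_enum ⟨hc0, hc1, hc2, hc3, h40, h41, h42, h43⟩ ha0 ha
  refine ⟨?_, fun n hn => ?_, fun m hm n hn => ?_⟩
  · ext x
    constructor
    · rintro ⟨n, hn, rfl⟩
      exact exists_enum_sub_enum_eq (Nat.one_le_iff_ne_zero.mp hn)
    · rintro ⟨m, hm, rfl⟩
      have h2m : 1 < 2 ^ m := Nat.one_lt_two_pow (by omega)
      refine ⟨2 ^ m - 1, by omega, ?_⟩
      exact ((enum_sub_enum_eq_iff (by omega) (by omega)).2 (.inr ⟨0, by omega⟩)).symm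
  · have h1 := enum_sub_enum_eq_iff one_ne_zero (Nat.one_le_iff_ne_zero.mp hn)
    rw [show (4 ^ 1 - 1) / 3 = 1 from rfl, pow_one, Nat.even_iff] at h1
    rw [h1]
    constructor
    · rintro (⟨-, h⟩ | ⟨k, hk⟩) <;> omega
    · intro h
      by_cases h2 : n % 2 = 0
      · exact .inl ⟨rfl, h2⟩
      · exact .inr ⟨n / 4, by omega⟩
  · rw [enum_sub_enum_eq_iff (by omega) (by omega), or_iff_right fun h => by omega]
    refine exists_congr fun k => ?_
    have h2m : 1 ≤ 2 ^ m := Nat.one_le_two_pow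
    have : 2 ^ m * (2 * k + 1) = 2 ^ (m + 1) * k + 2 ^ m := by ring
    omega
end

section
/- With t the Prouhet–Thue–Morse sequence (t_n = s_2(n) mod 2) and a_n the n-th element of {m ≥ 1 : c_m = 1} (a_0 = 0), we have t_{a_{2n}} = t_n and t_{a_{2n+1}} = t_{n+1} for all n ≥ 0; equivalently t_{a_n} = ½(t_n + t_{n+1}) + ½(−1)^n (t_n − t_{n+1}). -/
namespace PTMaux

/-- binary digits of `n` read in base 4 -/
def gg (n : ℕ) : ℕ := Nat.ofDigits 4 (Nat.digits 2 n)

lemma gg0 : gg 0 = 0 := by simp [gg]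
lemma gg1 : gg 1 = 1 := by simp [gg]

lemma ggE (n : ℕ) : gg (2 * n) = 4 * gg n := by
  rcases Nat.eq_zero_or_pos n with rfl | hn
  · simp [gg]
  · have h1 : (2 * n) % 2 = 0 := by omega
    have h2 : (2 * n) / 2 = n := by omega
    rw [gg, Nat.digits_def' (by norm_num : 1 < 2) (by omega), h1, h2,
      Nat.ofDigits_cons]
    simp [gg]

lemma ggO (n : ℕ) : gg (2 * n + 1) = 4 * gg n + 1 := by
  have h1 : (2 * n + 1) % 2 = 1 := by omega
  have h2 : (2 * n + 1) / 2 = n := by omega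
  rw [gg, Nat.digits_def' (by norm_num : 1 < 2) (by omega), h1, h2,
    Nat.ofDigits_cons]
  simp [gg]; ring

lemma ggmono : StrictMono gg := by
  apply strictMono_nat_of_lt_succ
  intro n
  induction n using Nat.strong_induction_on with
  | _ n ih =>
    rcases Nat.even_or_odd n with ⟨m, hm⟩ | ⟨m, hm⟩
    · subst hm
      rw [show m + m = 2 * m by ring, show 2 * m + 1 = 2 * m + 1 from rfl, ggE, ggO]
      omega
    · subst hm
      rcases Nat.eq_zero_or_pos m with rfl | hm0
      · simp only [show (2:ℕ) * 0 + 1 = 1 from rfl, show (2:ℕ) * 0 + 1 + 1 = 2 * 1 from rfl,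
          ggE, gg1]
        omega
      · have := ih (m - 1) (by omega)
        have hmm : m - 1 + 1 = m := by omega
        rw [hmm] at this
        rw [show 2 * m + 1 + 1 = 2 * (m + 1) by ring, ggO, ggE]
        have := ih m (by omega)
        omega

lemma ggpos {n : ℕ} (h : 1 ≤ n) : 1 ≤ gg n := by
  have : gg 0 < gg n := ggmono (by omega)
  rw [gg0] at this; omega

/-- all base-4 digits are ≤ 1 -/
def QQ (m : ℕ) : Prop := ∀ d ∈ Nat.digits 4 m, d ≤ 1

lemma QQ_g (k : ℕ) : QQ (gg k) := by
  rcases Nat.eq_zero_or_pos k with rfl | hk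
  · intro d hd; simp [gg0] at hd
  · intro d hd
    rw [gg, Nat.digits_ofDigits 4 (by norm_num) _
      (fun d hd => lt_of_lt_of_le (Nat.digits_lt_base (by norm_num) hd) (by norm_num))
      (fun h => Nat.getLast_digit_ne_zero 2 (by omega))] at hd
    exact Nat.lt_succ_iff.mp (Nat.digits_lt_base (by norm_num) hd)

lemma QQ_iff (m : ℕ) : QQ m ↔ ∃ k, gg k = m := by
  constructor
  · intro hQ
    rcases Nat.eq_zero_or_pos m with rfl | hm
    · exact ⟨0, gg0⟩
    refine ⟨Nat.ofDigits 2 (Nat.digits 4 m), ?_⟩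
    rw [gg, Nat.digits_ofDigits 2 (by norm_num) _
      (fun d hd => by have := hQ d hd; omega)
      (fun h => Nat.getLast_digit_ne_zero 4 (by omega))]
    exact Nat.ofDigits_digits 4 m
  · rintro ⟨k, rfl⟩; exact QQ_g k

lemma QQdig {m r : ℕ} (hr : r < 4) : QQ (4 * m + r) ↔ r ≤ 1 ∧ QQ m := by
  rcases Nat.eq_zero_or_pos (4 * m + r) with h0 | hpos
  · have : m = 0 ∧ r = 0 := by omega
    obtain ⟨rfl, rfl⟩ := this
    simp [QQ]
  · have h1 : (4 * m + r) % 4 = r := by omega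
    have h2 : (4 * m + r) / 4 = m := by omega
    unfold QQ
    rw [Nat.digits_def' (by norm_num : 1 < 4) hpos, h1, h2]
    simp

lemma QQstep (q : ℕ) : QQ (2 * q + 1) ↔ QQ (2 * q) := by
  rcases Nat.even_or_odd q with ⟨s, hs⟩ | ⟨s, hs⟩
  · subst hs
    rw [show 2 * (s + s) + 1 = 4 * s + 1 by ring, show 2 * (s + s) = 4 * s + 0 by ring,
      QQdig (by norm_num), QQdig (by norm_num)]
    simp
  · subst hs
    rw [show 2 * (2 * s + 1) + 1 = 4 * s + 3 by ring, show 2 * (2 * s + 1) = 4 * s + 2 by ring,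
      QQdig (by norm_num), QQdig (by norm_num)]
    simp

end PTMaux

namespace PTMaux

open Classical in
noncomputable def ch (m : ℕ) : ZMod 2 := if QQ m then 1 else 0

lemma ch_one {m : ℕ} (h : QQ m) : ch m = 1 := by simp [ch, h]
lemma ch_zero {m : ℕ} (h : ¬ QQ m) : ch m = 0 := by simp [ch, h]
lemma ch_eq_one_iff {m : ℕ} : ch m = 1 ↔ QQ m := by
  by_cases h : QQ m <;> simp [ch, h]

lemma ch_step1 (q : ℕ) : ch (2 * q + 1) = ch (2 * q) := by
  by_cases h : QQ (2 * q)
  · rw [ch_one ((QQstep q).mpr h), ch_one h]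
  · rw [ch_zero (fun hh => h ((QQstep q).mp hh)), ch_zero h]

lemma ch_step3 (q : ℕ) : ch (2 * q) + ch ((q + 1) / 2) = ch (2 * q + 2) := by
  rcases Nat.even_or_odd q with ⟨s, hs⟩ | ⟨s, hs⟩
  · subst hs
    have e1 : QQ (2 * (s + s)) ↔ QQ s := by
      rw [show 2 * (s + s) = 4 * s + 0 by ring, QQdig (by norm_num)]; simp
    have e2 : ¬ QQ (2 * (s + s) + 2) := by
      rw [show 2 * (s + s) + 2 = 4 * s + 2 by ring, QQdig (by norm_num)]; simp
    have e3 : (s + s + 1) / 2 = s := by omega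
    rw [e3, ch_zero e2]
    by_cases h : QQ s
    · rw [ch_one (e1.mpr h), ch_one h]; decide
    · rw [ch_zero (fun hh => h (e1.mp hh)), ch_zero h]; decide
  · subst hs
    have e1 : ¬ QQ (2 * (2 * s + 1)) := by
      rw [show 2 * (2 * s + 1) = 4 * s + 2 by ring, QQdig (by norm_num)]; simp
    have e2 : QQ (2 * (2 * s + 1) + 2) ↔ QQ (s + 1) := by
      rw [show 2 * (2 * s + 1) + 2 = 4 * (s + 1) + 0 by ring, QQdig (by norm_num)]; simp
    have e3 : (2 * s + 1 + 1) / 2 = s + 1 := by omega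
    rw [e3, ch_zero e1, zero_add]
    by_cases h : QQ (s + 1)
    · rw [ch_one (e2.mpr h), ch_one h]
    · rw [ch_zero (fun hh => h (e2.mp hh)), ch_zero h]

def bb (j : ℕ) : ℕ := if Even j then 2 * gg (j / 2 + 1) - 1 else 2 * gg (j / 2 + 1)

lemma bbE (i : ℕ) : bb (2 * i) = 2 * gg (i + 1) - 1 := by
  simp [bb, even_two_mul i, Nat.mul_div_cancel_left i (by norm_num : 0 < 2)]

lemma bbO (i : ℕ) : bb (2 * i + 1) = 2 * gg (i + 1) := by
  have h2 : (2 * i + 1) / 2 = i := by omega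
  have hodd : ¬ Even (2 * i + 1) := by simp [parity_simps]
  simp [bb, h2, hodd]

lemma bbQ (j : ℕ) : 1 ≤ bb j ∧ QQ ((bb j + 1) / 2) := by
  rcases Nat.even_or_odd j with ⟨i, hi⟩ | ⟨i, hi⟩
  · have := ggpos (Nat.le_add_left 1 i)
    rw [hi, show i + i = 2 * i by ring, bbE]
    have hd : (2 * gg (i + 1) - 1 + 1) / 2 = gg (i + 1) := by omega
    refine ⟨by omega, ?_⟩
    rw [hd]; exact QQ_g (i + 1)
  · have := ggpos (Nat.le_add_left 1 i)
    rw [hi, bbO]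
    have hd : (2 * gg (i + 1) + 1) / 2 = gg (i + 1) := by omega
    refine ⟨by omega, ?_⟩
    rw [hd]; exact QQ_g (i + 1)

lemma bbmono : StrictMono bb := by
  apply strictMono_nat_of_lt_succ
  intro j
  rcases Nat.even_or_odd j with ⟨i, hi⟩ | ⟨i, hi⟩
  · have := ggpos (Nat.le_add_left 1 i)
    rw [hi, show i + i = 2 * i by ring, bbE, show 2 * i + 1 = 2 * i + 1 from rfl, bbO]
    omega
  · have h1 : gg (i + 1) < gg (i + 1 + 1) := ggmono (by omega)
    have := ggpos (Nat.le_add_left 1 i)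
    rw [hi, bbO, show 2 * i + 1 + 1 = 2 * (i + 1) by ring, bbE]
    omega

lemma bbsurj {m : ℕ} (hm : 1 ≤ m) (hQ : QQ ((m + 1) / 2)) : ∃ j, bb j = m := by
  obtain ⟨k, hk⟩ := (QQ_iff _).mp hQ
  have hG : 1 ≤ (m + 1) / 2 := by omega
  have hk1 : 1 ≤ k := by
    by_contra h
    have : k = 0 := by omega
    rw [this, gg0] at hk; omega
  rcases (by omega : m = 2 * ((m + 1) / 2) - 1 ∨ m = 2 * ((m + 1) / 2)) with h | h
  · refine ⟨2 * (k - 1), ?_⟩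
    rw [bbE, show k - 1 + 1 = k by omega, hk]; omega
  · refine ⟨2 * (k - 1) + 1, ?_⟩
    rw [bbO, show k - 1 + 1 = k by omega, hk]; omega

lemma tE {t : ℕ → ZMod 2} (ht : ∀ n, t n = ((Nat.digits 2 n).sum : ZMod 2)) (n : ℕ) :
    t (2 * n) = t n := by
  rcases Nat.eq_zero_or_pos n with rfl | hn
  · norm_num
  · rw [ht, ht, Nat.digits_def' (by norm_num : 1 < 2) (by omega),
      show (2 * n) % 2 = 0 by omega, show (2 * n) / 2 = n by omega]
    simp

lemma tO {t : ℕ → ZMod 2} (ht : ∀ n, t n = ((Nat.digits 2 n).sum : ZMod 2)) (n : ℕ) :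
    t (2 * n + 1) = t n + 1 := by
  rw [ht, ht, Nat.digits_def' (by norm_num : 1 < 2) (by omega),
    show (2 * n + 1) % 2 = 1 by omega, show (2 * n + 1) / 2 = n by omega]
  push_cast [List.sum_cons]
  ring

lemma tgg {t : ℕ → ZMod 2} (ht : ∀ n, t n = ((Nat.digits 2 n).sum : ZMod 2)) (n : ℕ) :
    t (gg n) = t n := by
  induction n using Nat.strong_induction_on with
  | _ n ih =>
    rcases Nat.eq_zero_or_pos n with rfl | hn
    · rw [gg0]
    rcases Nat.even_or_odd n with ⟨m, hm⟩ | ⟨m, hm⟩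
    · have hm' : n = 2 * m := by omega
      subst hm'
      rw [ggE, show 4 * gg m = 2 * (2 * gg m) by ring, tE ht, tE ht, ih m (by omega), tE ht]
    · subst hm
      rw [ggO, show 4 * gg m + 1 = 2 * (2 * gg m) + 1 by ring, tO ht, tE ht,
        ih m (by omega), tO ht]

lemma tgg1 {t : ℕ → ZMod 2} (ht : ∀ n, t n = ((Nat.digits 2 n).sum : ZMod 2)) :
    ∀ n, 1 ≤ n → t (2 * gg n - 1) = t n := by
  intro n
  induction n using Nat.strong_induction_on with
  | _ n ih =>
    intro hn
    rcases Nat.even_or_odd n with ⟨m, hm⟩ | ⟨m, hm⟩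
    · have hm' : n = 2 * m := by omega
      subst hm'
      have hm1 : 1 ≤ m := by omega
      have hg : 1 ≤ gg m := ggpos hm1
      have key : 2 * gg (2 * m) - 1 = 2 * (2 * (2 * gg m - 1) + 1) + 1 := by
        rw [ggE]; omega
      rw [key, tO ht, tO ht, ih m (by omega) hm1, tE ht]
      have : (1 : ZMod 2) + 1 = 0 := by decide
      rw [add_assoc, this, add_zero]
    · subst hm
      rcases Nat.eq_zero_or_pos m with rfl | hm1
      · norm_num [gg1]
      have key : 2 * gg (2 * m + 1) - 1 = 2 * (2 * (2 * gg m)) + 1 := by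
        rw [ggO]; ring_nf; omega
      rw [key, tO ht, tE ht, tE ht, tgg ht, tO ht]

end PTMaux

open PTMaux


/-- With `t` the Prouhet–Thue–Morse sequence (`tₙ = s₂(n) mod 2`) and `a` the
increasing enumeration of `{m ≥ 1 : c_m = 1}` (`a₀ = 0`), we have
`t_{a_{2n}} = tₙ` and `t_{a_{2n+1}} = t_{n+1}` for all `n`. -/
theorem ptm_at_a (c : ℕ → ZMod 2) (hc0 : c 0 = 0) (hc1 : c 1 = 1) (hc2 : c 2 = 1) (hc3 : c 3 = 0)
    (h40 : ∀ n : ℕ, 1 ≤ n → c (4 * n) = c (4 * n - 1))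
    (h41 : ∀ n : ℕ, 1 ≤ n → c (4 * n + 1) = c (4 * n - 1))
    (h42 : ∀ n : ℕ, 1 ≤ n → c (4 * n + 2) = c (4 * n - 1))
    (h43 : ∀ n : ℕ, 1 ≤ n → c (4 * n + 3) = c (4 * n - 1) + c n)
    (a : ℕ → ℕ) (ha0 : a 0 = 0)
    (ha : ∀ n : ℕ, a (n + 1) = Nat.nth (fun m => 1 ≤ m ∧ c m = 1) n)
    (t : ℕ → ZMod 2) (ht : ∀ n, t n = ((Nat.digits 2 n).sum : ZMod 2)) :
    ∀ n : ℕ, t (a (2 * n)) = t n ∧ t (a (2 * n + 1)) = t (n + 1) := by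
  have hQ1 : QQ 1 := (QQ_iff 1).mpr ⟨1, gg1⟩
  have hQ2 : ¬ QQ 2 := by
    rw [show (2 : ℕ) = 4 * 0 + 2 by norm_num, QQdig (by norm_num)]; simp
  have cf : ∀ m, 1 ≤ m → c m = ch ((m + 1) / 2) := by
    intro m
    induction m using Nat.strong_induction_on with
    | _ m ih =>
      intro hm
      rcases (by omega : m = 1 ∨ m = 2 ∨ m = 3 ∨ 4 ≤ m) with rfl | rfl | rfl | h4
      · rw [hc1, show (1 + 1) / 2 = 1 by norm_num, ch_one hQ1]
      · rw [hc2, show (2 + 1) / 2 = 1 by norm_num, ch_one hQ1]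
      · rw [hc3, show (3 + 1) / 2 = 2 by norm_num, ch_zero hQ2]
      obtain ⟨q, r, hr, hm4⟩ : ∃ q r, r < 4 ∧ m = 4 * q + r :=
        ⟨m / 4, m % 4, by omega, by omega⟩
      have hq1 : 1 ≤ q := by omega
      have e1 : c (4 * q - 1) = ch (2 * q) := by
        rw [ih (4 * q - 1) (by omega) (by omega), show (4 * q - 1 + 1) / 2 = 2 * q by omega]
      subst hm4
      interval_cases r
      · rw [show 4 * q + 0 = 4 * q by omega, h40 q hq1, e1,
          show (4 * q + 1) / 2 = 2 * q by omega]
      · rw [h41 q hq1, e1, show (4 * q + 1 + 1) / 2 = 2 * q + 1 by omega, ch_step1]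
      · rw [h42 q hq1, e1, show (4 * q + 2 + 1) / 2 = 2 * q + 1 by omega, ch_step1]
      · rw [h43 q hq1, e1, ih q (by omega) (by omega),
          show (4 * q + 3 + 1) / 2 = 2 * q + 2 by omega, ch_step3]
  have pIff : ∀ m, (1 ≤ m ∧ c m = 1) ↔ (1 ≤ m ∧ QQ ((m + 1) / 2)) := by
    intro m
    constructor
    · rintro ⟨h1, h2⟩
      refine ⟨h1, ch_eq_one_iff.mp ?_⟩
      rw [← cf m h1]; exact h2
    · rintro ⟨h1, h2⟩
      exact ⟨h1, (cf m h1).trans (ch_one h2)⟩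
  have hpb : ∀ j, (1 ≤ bb j ∧ c (bb j) = 1) := fun j => (pIff _).mpr (bbQ j)
  have hinf : (setOf fun m => 1 ≤ m ∧ c m = 1).Infinite :=
    Set.infinite_of_injective_forall_mem bbmono.injective hpb
  have hnth : ∀ j, Nat.nth (fun m => 1 ≤ m ∧ c m = 1) j = bb j := by
    intro j
    induction j using Nat.strong_induction_on with
    | _ j ih =>
      have hL := Nat.isLeast_nth_of_infinite hinf j
      refine hL.unique ⟨⟨hpb j, fun k hk => by rw [ih k hk]; exact bbmono hk⟩, ?_⟩
      rintro i ⟨hpi, hlt⟩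
      obtain ⟨j', hj'⟩ := bbsurj hpi.1 ((pIff i).mp hpi).2
      rcases lt_or_ge j' j with h | h
      · exfalso
        have := hlt j' h
        rw [ih j' h, hj'] at this
        exact lt_irrefl _ this
      · rw [← hj']; exact bbmono.monotone h
  intro n
  constructor
  · rcases Nat.eq_zero_or_pos n with rfl | hn
    · rw [mul_zero, ha0]
    · rw [show 2 * n = (2 * n - 1) + 1 by omega, ha, hnth,
        show 2 * n - 1 = 2 * (n - 1) + 1 by omega, bbO, show n - 1 + 1 = n by omega,
        tE ht, tgg ht]
  · rw [ha, hnth, bbE, tgg1 ht (n + 1) (by omega)]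
end

section
/- Let b : ℕ → ℕ satisfy b_0 = 0, b_{2n} = 4 b_n, b_{2n+1} = 4 b_n + 2. Then for every n ≥ 1, (2/3)(n^2 + 2n) ≤ b_n ≤ 2 n^2. -/
lemma b_key (b : ℕ → ℕ) (hb0 : b 0 = 0)
    (hbe : ∀ n, b (2 * n) = 4 * b n) (hbo : ∀ n, b (2 * n + 1) = 4 * b n + 2) :
    ∀ n : ℕ, 1 ≤ n → 2 * (n ^ 2 + 2 * n) ≤ 3 * b n ∧ b n ≤ 2 * n ^ 2 := by
  intro n
  induction n using Nat.strong_induction_on with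
  | _ n ih =>
    intro hn
    rcases Nat.even_or_odd n with ⟨m, hm⟩ | ⟨m, hm⟩
    · subst hm
      have hm1 : 1 ≤ m := by omega
      have hml : m < m + m := by omega
      obtain ⟨h1, h2⟩ := ih m hml hm1
      have hb : b (m + m) = 4 * b m := by
        have := hbe m; rwa [two_mul] at this
      constructor <;> rw [hb] <;> nlinarith
    · subst hm
      have hb : b (2 * m + 1) = 4 * b m + 2 := hbo m
      rcases Nat.eq_zero_or_pos m with rfl | hm1
      · have hb1 : b 1 = 2 := by simpa [hb0] using hbo 0
        simp only [Nat.mul_zero, Nat.zero_add]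
        omega
      · obtain ⟨h1, h2⟩ := ih m (by omega) hm1
        constructor <;> rw [hb] <;> nlinarith

/-- If `b₀ = 0`, `b_{2n} = 4bₙ`, `b_{2n+1} = 4bₙ + 2`, then for every `n ≥ 1`,
`(2/3)(n² + 2n) ≤ bₙ ≤ 2n²`. -/
theorem b_growth_bounds (b : ℕ → ℕ) (hb0 : b 0 = 0)
    (hbe : ∀ n, b (2 * n) = 4 * b n) (hbo : ∀ n, b (2 * n + 1) = 4 * b n + 2) :
    ∀ n : ℕ, 1 ≤ n →
      (2 / 3 : ℝ) * ((n : ℝ) ^ 2 + 2 * n) ≤ (b n : ℝ) ∧ (b n : ℝ) ≤ 2 * (n : ℝ) ^ 2 := by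
  intro n hn
  obtain ⟨h1, h2⟩ := b_key b hb0 hbe hbo n hn
  have h1' : (2 * (n ^ 2 + 2 * n) : ℝ) ≤ 3 * (b n : ℝ) := by exact_mod_cast h1
  have h2' : ((b n : ℝ)) ≤ 2 * (n : ℝ) ^ 2 := by exact_mod_cast h2
  constructor
  · linarith
  · exact h2'
end

section
/- Let b_0 = 0, b_{2n} = 4b_n, b_{2n+1} = 4b_n + 2. Then liminf_{n→∞} b_n/n^2 = 2/3, limsup_{n→∞} b_n/n^2 = 2, and the set {b_n/n^2 : n ≥ 1} is dense in [2/3, 2]. -/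
/-!
`b` is twice the Moser–de Bruijn sequence. Let `L n = (b n + 2/3) / (n+1)²` and
`I n = [L n, b n / n²]`. The recursion gives `b (2n) / (2n)² = b n / n²`, `L (2n+1) = L n` and
`L (2n) ≤ b (2n+1) / (2n+1)²`, hence `I n ⊆ I (2n) ∪ I (2n+1)`. Starting from `I 1 = [2/3, 2]`,
every `x ∈ [2/3, 2]` therefore lies in `I n` for arbitrarily large `n`, and since `I n` has length
at most `4/n`, `x` is a cluster point of `b n / n²`. As `2/3 ≤ b n / n² ≤ 2` for `n ≥ 1`, this gives
the liminf, the limsup and the density.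
-/

open Filter Topology Set

lemma mapClusterPt_of_frequently_mem_Icc {ι : Type*} {F : Filter ι} {l u d : ι → ℝ} {x : ℝ}
    (hx : ∃ᶠ i in F, x ∈ Icc (l i) (u i)) (hlu : ∀ᶠ i in F, u i - l i ≤ d i)
    (hd : Tendsto d F (𝓝 0)) : MapClusterPt x F u := by
  refine Metric.nhds_basis_ball.mapClusterPt_iff_frequently.2 fun ε hε => ?_
  refine (hx.and_eventually (hlu.and (hd.eventually (gt_mem_nhds hε)))).mono ?_
  rintro i ⟨⟨hl, hu⟩, hgap, hdε⟩
  rw [Metric.mem_ball, Real.dist_eq, abs_of_nonneg (by linarith)]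
  linarith

namespace MoserDeBruijn

noncomputable def sqRatio (b : ℕ → ℕ) (n : ℕ) : ℝ := (b n : ℝ) / (n : ℝ) ^ 2

/-- The limit of `b m / m²` along the largest descendants `m = 2ʲ (n+1) - 1` of `n`, for which
`b m = 4ʲ b n + 2 (4ʲ - 1) / 3`. -/
noncomputable def lowerRatio (b : ℕ → ℕ) (n : ℕ) : ℝ := ((b n : ℝ) + 2 / 3) / ((n : ℝ) + 1) ^ 2

section Pointwise

variable {b : ℕ → ℕ} {n : ℕ}

lemma sqRatio_two_mul (h : b (2 * n) = 4 * b n) : sqRatio b (2 * n) = sqRatio b n := by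
  rcases eq_or_ne n 0 with rfl | hn
  · rfl
  have : (n : ℝ) ≠ 0 := Nat.cast_ne_zero.2 hn
  simp only [sqRatio, h]
  push_cast
  field_simp
  ring

lemma lowerRatio_two_mul_add_one (h : b (2 * n + 1) = 4 * b n + 2) :
    lowerRatio b (2 * n + 1) = lowerRatio b n := by
  simp only [lowerRatio, h]
  push_cast
  field_simp
  ring

lemma lowerRatio_two_mul_le_sqRatio_two_mul_add_one (he : b (2 * n) = 4 * b n)
    (ho : b (2 * n + 1) = 4 * b n + 2) : lowerRatio b (2 * n) ≤ sqRatio b (2 * n + 1) := by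
  simp only [lowerRatio, sqRatio, he, ho]
  push_cast
  gcongr
  norm_num

lemma sqRatio_le_two (h : b n ≤ 2 * n ^ 2) : sqRatio b n ≤ 2 := by
  rcases eq_or_ne n 0 with rfl | hn
  · simp [sqRatio]
  have : (0 : ℝ) < (n : ℝ) ^ 2 := by positivity
  rw [sqRatio, div_le_iff₀ this]
  exact_mod_cast h

lemma two_div_three_le_sqRatio (hn : n ≠ 0) (h : 2 * n ^ 2 ≤ 3 * b n) : 2 / 3 ≤ sqRatio b n := by
  have : (0 : ℝ) < (n : ℝ) ^ 2 := by positivity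
  rw [sqRatio, le_div_iff₀ this]
  have : 2 * (n : ℝ) ^ 2 ≤ 3 * b n := by exact_mod_cast h
  linarith

lemma sqRatio_sub_lowerRatio_le (h : b n ≤ 2 * n ^ 2) :
    sqRatio b n - lowerRatio b n ≤ 4 / n := by
  rcases eq_or_ne n 0 with rfl | hn
  · have : (0 : ℝ) ≤ b 0 := Nat.cast_nonneg _
    simp only [sqRatio, lowerRatio]
    norm_num
    linarith
  have hB : (b n : ℝ) ≤ 2 * (n : ℝ) ^ 2 := by exact_mod_cast h
  have hn : (1 : ℝ) ≤ n := by exact_mod_cast Nat.one_le_iff_ne_zero.2 hn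
  have hB0 : (0 : ℝ) ≤ b n := Nat.cast_nonneg _
  rw [sqRatio, lowerRatio, div_sub_div _ _ (by positivity) (by positivity),
    div_le_div_iff₀ (by positivity) (by positivity)]
  nlinarith [mul_nonneg (mul_nonneg (sub_nonneg.2 hB) (by linarith : (0 : ℝ) ≤ 2 * n + 1))
    (by linarith : (0 : ℝ) ≤ n + 1)]

end Pointwise

section Recursion

variable {b : ℕ → ℕ} (hbe : ∀ n, b (2 * n) = 4 * b n) (hbo : ∀ n, b (2 * n + 1) = 4 * b n + 2)
include hbe hbo

lemma b_one : b 1 = 2 := by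
  have h0 := hbe 0
  have h1 := hbo 0
  simp only [mul_zero, zero_add] at h0 h1
  omega

lemma b_le_two_mul_sq (n : ℕ) : b n ≤ 2 * n ^ 2 := by
  induction n using Nat.evenOddRec with
  | h0 => have := hbe 0; simp only [mul_zero, pow_two] at this ⊢; omega
  | h_even n ih => rw [hbe]; nlinarith
  | h_odd n ih => rw [hbo]; nlinarith [ih, Nat.zero_le n]

lemma two_mul_sq_add_le_three_mul_b (n : ℕ) : 2 * n ^ 2 + 4 * n ≤ 3 * b n := by
  induction n using Nat.evenOddRec with
  | h0 => simp
  | h_even n ih => rw [hbe]; nlinarith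
  | h_odd n ih => rw [hbo]; nlinarith

lemma Icc_subset_union_Icc_children (n : ℕ) :
    Icc (lowerRatio b n) (sqRatio b n) ⊆
      Icc (lowerRatio b (2 * n)) (sqRatio b (2 * n)) ∪
        Icc (lowerRatio b (2 * n + 1)) (sqRatio b (2 * n + 1)) := by
  rintro x ⟨hl, hu⟩
  by_cases hx : lowerRatio b (2 * n) ≤ x
  · exact Or.inl ⟨hx, (sqRatio_two_mul (hbe n)).symm ▸ hu⟩
  · refine Or.inr ⟨(lowerRatio_two_mul_add_one (hbo n)).symm ▸ hl, ?_⟩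
    exact (not_le.1 hx).le.trans (lowerRatio_two_mul_le_sqRatio_two_mul_add_one (hbe n) (hbo n))

lemma frequently_mem_Icc {x : ℝ} (hx : x ∈ Icc (2 / 3 : ℝ) 2) :
    ∃ᶠ n in atTop, x ∈ Icc (lowerRatio b n) (sqRatio b n) := by
  suffices h : ∀ N, ∃ n, N < n ∧ x ∈ Icc (lowerRatio b n) (sqRatio b n) from
    frequently_atTop.2 fun N => (h N).imp fun n hn => ⟨hn.1.le, hn.2⟩
  intro N
  induction N with
  | zero =>
    refine ⟨1, one_pos, ?_⟩
    simp only [lowerRatio, sqRatio, b_one hbe hbo]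
    norm_num
    exact hx
  | succ N ih =>
    obtain ⟨n, hNn, hn⟩ := ih
    rcases Icc_subset_union_Icc_children hbe hbo n hn with h | h
    exacts [⟨2 * n, by omega, h⟩, ⟨2 * n + 1, by omega, h⟩]

lemma mapClusterPt_sqRatio {x : ℝ} (hx : x ∈ Icc (2 / 3 : ℝ) 2) :
    MapClusterPt x atTop (sqRatio b) :=
  mapClusterPt_of_frequently_mem_Icc (frequently_mem_Icc hbe hbo hx)
    (Eventually.of_forall fun n => sqRatio_sub_lowerRatio_le (b_le_two_mul_sq hbe hbo n))
    (tendsto_const_div_atTop_nhds_zero_nat 4)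

end Recursion

end MoserDeBruijn

open MoserDeBruijn in
theorem b_ratio_liminf_limsup_dense_general (b : ℕ → ℕ)
    (hbe : ∀ n, b (2 * n) = 4 * b n) (hbo : ∀ n, b (2 * n + 1) = 4 * b n + 2) :
    liminf (fun n : ℕ => (b n : ℝ) / (n : ℝ) ^ 2) atTop = 2 / 3 ∧
    limsup (fun n : ℕ => (b n : ℝ) / (n : ℝ) ^ 2) atTop = 2 ∧
    Set.Icc (2 / 3 : ℝ) 2 ⊆
      closure {x : ℝ | ∃ n : ℕ, 1 ≤ n ∧ x = (b n : ℝ) / (n : ℝ) ^ 2} := by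
  change liminf (sqRatio b) atTop = 2 / 3 ∧ limsup (sqRatio b) atTop = 2 ∧
    Icc (2 / 3 : ℝ) 2 ⊆ closure {x | ∃ n, 1 ≤ n ∧ x = sqRatio b n}
  have hle : ∀ n, sqRatio b n ≤ 2 := fun n => sqRatio_le_two (b_le_two_mul_sq hbe hbo n)
  have hge : ∀ᶠ n in atTop, 2 / 3 ≤ sqRatio b n :=
    (eventually_ge_atTop 1).mono fun n hn => two_div_three_le_sqRatio (by omega)
      (le_trans (by omega) (two_mul_sq_add_le_three_mul_b hbe hbo n))
  have hcluster := fun x (hx : x ∈ Icc (2 / 3 : ℝ) 2) => mapClusterPt_sqRatio hbe hbo hx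
  refine ⟨le_antisymm ?_ ?_, le_antisymm ?_ ?_, fun x hx => ?_⟩
  · exact (hcluster _ ⟨le_rfl, by norm_num⟩).liminf_le (isBoundedUnder_of_eventually_ge hge)
  · exact le_liminf_of_le (isCoboundedUnder_ge_of_le _ hle) hge
  · exact limsup_le_of_le (isCoboundedUnder_le_of_eventually_le _ hge) (.of_forall hle)
  · exact (hcluster _ ⟨by norm_num, le_rfl⟩).le_limsup (isBoundedUnder_of ⟨2, hle⟩)
  · have := (mapClusterPt_atTop_iff_forall_mem_closure.1 (hcluster x hx)) 1
    exact closure_mono (by rintro _ ⟨n, hn, rfl⟩; exact ⟨n, hn, rfl⟩) this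

/-- `liminf bₙ/n² = 2/3`, `limsup bₙ/n² = 2`, and `{bₙ/n² : n ≥ 1}` is dense in
`[2/3, 2]`. -/
theorem b_ratio_liminf_limsup_dense (b : ℕ → ℕ) (hb0 : b 0 = 0)
    (hbe : ∀ n, b (2 * n) = 4 * b n) (hbo : ∀ n, b (2 * n + 1) = 4 * b n + 2) :
    liminf (fun n : ℕ => (b n : ℝ) / (n : ℝ) ^ 2) atTop = 2 / 3 ∧
    limsup (fun n : ℕ => (b n : ℝ) / (n : ℝ) ^ 2) atTop = 2 ∧
    Set.Icc (2 / 3 : ℝ) 2 ⊆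
      closure {x : ℝ | ∃ n : ℕ, 1 ≤ n ∧ x = (b n : ℝ) / (n : ℝ) ^ 2} :=
  b_ratio_liminf_limsup_dense_general b hbe hbo
end
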